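/- arXiv:2407.03167 — 8 statements merged into one kernel-verified Lean document; each statement's English description precedes it below -/
import Mathlib

section
/- Let ℬ ⊆ 𝒜 be a σ-algebra, suppose F is continuous almost surely, and suppose the upper endpoint of the conditional distribution of Y given ℬ equals x_Y (the endpoint assumption). If the severity condition holds — for every u ∈ [0,1], P(Z_F^{(t)} ≤ u, Y > t | ℬ)/P(Y > t | ℬ) → u almost surely as t → x_Y — and in particular if F is tail ℬ-calibrated for Y, then P(Y = x_Y) = 0. -/
open MeasureTheory ProbabilityTheory Filter Set Topology

noncomputable section

/-- Conditional probability of a set given a sub-σ-algebra, as a real-valued function. -/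
def condProb {Ω : Type*} {m0 : MeasurableSpace Ω} (μ : Measure Ω) (m : MeasurableSpace Ω)
    (A : Set Ω) : Ω → ℝ :=
  μ[A.indicator (fun _ => (1 : ℝ))|m]

/-- The conditional forecast excess distribution `F_t`. -/
def excessCdf (F : ℝ → ℝ) (t x : ℝ) : ℝ :=
  if F t < 1 then (F (x + t) - F t) / (1 - F t) else 1

/-- The excess probability integral transform `Z_F^{(t)}`. -/
def excessPIT {Ω : Type*} (F : Ω → ℝ → ℝ) (Y : Ω → ℝ) (t : ℝ) (ω : Ω) : ℝ :=
  excessCdf (F ω) t (Y ω - t)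

/-- Upper endpoint `x_Y = sup {x : P(Y ≤ x) < 1}` of the outcome, in `EReal`. -/
def upperEndpoint {Ω : Type*} {mΩ : MeasurableSpace Ω} (μ : Measure Ω) (Y : Ω → ℝ) : EReal :=
  sSup (Real.toEReal '' {x : ℝ | μ {ω | Y ω ≤ x} < 1})

/-- Upper endpoint of a (deterministic) cdf. -/
def cdfEndpoint (F : ℝ → ℝ) : EReal :=
  sSup (Real.toEReal '' {x : ℝ | F x < 1})

/-- The filter of real `t` tending to an extended-real endpoint `e` from below. -/
def toEndpoint (e : EReal) : Filter ℝ :=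
  Filter.comap Real.toEReal (𝓝[<] e)

/-- `F` is a random cdf: measurable in `ω`, and almost surely a continuous cdf. -/
def IsRandomCdf {Ω : Type*} {mΩ : MeasurableSpace Ω} (μ : Measure Ω) (F : Ω → ℝ → ℝ) : Prop :=
  (∀ x : ℝ, Measurable fun ω => F ω x) ∧
    ∀ᵐ ω ∂μ, Monotone (F ω) ∧ Continuous (F ω) ∧
      Tendsto (F ω) atTop (𝓝 1) ∧ Tendsto (F ω) atBot (𝓝 0)

/-- The endpoint assumption for a sub-σ-algebra `m`: the conditional distribution of `Y`
given `m` has (non-random) upper endpoint `x_Y`. -/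
def EndpointAssumption {Ω : Type*} {m0 : MeasurableSpace Ω} (μ : Measure Ω)
    (m : MeasurableSpace Ω) (Y : Ω → ℝ) : Prop :=
  (∀ t : ℝ, (t : EReal) < upperEndpoint μ Y →
      ∀ᵐ ω ∂μ, 0 < condProb μ m {ω' | t < Y ω'} ω) ∧
    ∀ᵐ ω ∂μ, condProb μ m {ω' | upperEndpoint μ Y < (Y ω' : EReal)} ω = 0

/-- `F` is tail `m`-calibrated for `Y`. -/
def TailCalibrated {Ω : Type*} {m0 : MeasurableSpace Ω} (μ : Measure Ω)
    (m : MeasurableSpace Ω) (F : Ω → ℝ → ℝ) (Y : Ω → ℝ) : Prop :=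
  (∀ t : ℝ, (t : EReal) < upperEndpoint μ Y →
      ∀ᵐ ω ∂μ, 0 < (μ[fun ω' => 1 - F ω' t|m]) ω) ∧
    ∀ u ∈ Icc (0 : ℝ) 1, ∀ᵐ ω ∂μ,
      Tendsto (fun t : ℝ =>
          condProb μ m {ω' | excessPIT F Y t ω' ≤ u ∧ t < Y ω'} ω /
            (μ[fun ω' => 1 - F ω' t|m]) ω)
        (toEndpoint (upperEndpoint μ Y)) (𝓝 u)

/-- `F` is probabilistically tail calibrated for `Y`. -/
def ProbTailCalibrated {Ω : Type*} {mΩ : MeasurableSpace Ω} (μ : Measure Ω)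
    (F : Ω → ℝ → ℝ) (Y : Ω → ℝ) : Prop :=
  (∀ t : ℝ, (t : EReal) < upperEndpoint μ Y → 0 < ∫ ω, (1 - F ω t) ∂μ) ∧
    ∀ u ∈ Icc (0 : ℝ) 1,
      Tendsto (fun t : ℝ =>
          (μ {ω | excessPIT F Y t ω ≤ u ∧ t < Y ω}).toReal / ∫ ω, (1 - F ω t) ∂μ)
        (toEndpoint (upperEndpoint μ Y)) (𝓝 u)

/-- `F` is marginally tail calibrated for `Y`. -/
def MargTailCalibrated {Ω : Type*} {mΩ : MeasurableSpace Ω} (μ : Measure Ω)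
    (F : Ω → ℝ → ℝ) (Y : Ω → ℝ) : Prop :=
  (∀ t : ℝ, (t : EReal) < upperEndpoint μ Y → 0 < ∫ ω, (1 - F ω t) ∂μ) ∧
    Tendsto (fun t : ℝ =>
        ⨆ x : Ici (0 : ℝ),
          |(μ {ω | t < Y ω ∧ Y ω ≤ t + (x : ℝ)}).toReal / (∫ ω, (1 - F ω t) ∂μ) -
            (∫ ω in {ω' | t < Y ω'}, excessCdf (F ω) t (x : ℝ) ∂μ) /
              (μ {ω' | t < Y ω'}).toReal|)
      (toEndpoint (upperEndpoint μ Y)) (𝓝 0)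

/-- Generalized Pareto survival function `(1 + ξ x)₊^(-1/ξ)` with unit scale and shape `ξ`,
interpreted as `exp (-x)` when `ξ = 0`. -/
def gpdSurv (ξ x : ℝ) : ℝ :=
  if ξ = 0 then Real.exp (-x) else (max (1 + ξ * x) 0) ^ (-(1 : ℝ) / ξ)

lemma exists_meas_FY {Ω : Type*} {m0 : MeasurableSpace Ω} {μ : Measure Ω}
    (F : Ω → ℝ → ℝ) (Y : Ω → ℝ) (hY : Measurable Y)
    (hFm : ∀ x : ℝ, Measurable fun ω => F ω x)
    (hgood : ∀ᵐ ω ∂μ, Monotone (F ω) ∧ Continuous (F ω) ∧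
      Tendsto (F ω) atTop (𝓝 1) ∧ Tendsto (F ω) atBot (𝓝 0)) :
    ∃ g : Ω → ℝ, Measurable g ∧ g =ᵐ[μ] fun ω => F ω (Y ω) := by
  refine ⟨fun ω => ⨅ q : ℚ, if Y ω ≤ (q : ℝ) then F ω q else 1, ?_, ?_⟩
  · exact Measurable.iInf fun q =>
      Measurable.ite (measurableSet_le hY measurable_const) (hFm q) measurable_const
  · filter_upwards [hgood] with ω hω
    obtain ⟨hmono, hcont, htop, -⟩ := hω
    have hle1 : ∀ x, F ω x ≤ 1 := hmono.ge_of_tendsto htop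
    have hlb : ∀ q : ℚ, F ω (Y ω) ≤ if Y ω ≤ (q : ℝ) then F ω q else 1 := by
      intro q
      split
      · exact hmono ‹_›
      · exact hle1 _
    have hbdd : BddBelow (range fun q : ℚ => if Y ω ≤ (q : ℝ) then F ω q else 1) := by
      refine ⟨F ω (Y ω), ?_⟩
      rintro x ⟨q, rfl⟩
      exact hlb q
    refine le_antisymm ?_ (le_ciInf hlb)
    refine le_of_forall_pos_le_add fun ε hε => ?_
    have hev : ∀ᶠ x in 𝓝 (Y ω), F ω x < F ω (Y ω) + ε :=
      (hcont.tendsto (Y ω)).eventually_lt_const (lt_add_of_pos_right _ hε)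
    obtain ⟨δ, hδ, hball⟩ := Metric.eventually_nhds_iff.mp hev
    obtain ⟨q, hq1, hq2⟩ := exists_rat_btwn (lt_add_of_pos_right (Y ω) hδ)
    have hd : dist (q : ℝ) (Y ω) < δ := by
      rw [Real.dist_eq, abs_of_nonneg (by linarith)]
      linarith
    refine ciInf_le_of_le hbdd q ?_
    rw [if_pos hq1.le]
    exact (hball hd).le

lemma condProb_nonneg {Ω : Type*} {m0 : MeasurableSpace Ω} (μ : Measure Ω)
    (m : MeasurableSpace Ω) (A : Set Ω) : ∀ᵐ ω ∂μ, 0 ≤ condProb μ m A ω :=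
  condExp_nonneg (Eventually.of_forall fun ω =>
    Set.indicator_nonneg (fun _ _ => zero_le_one) ω)

lemma condProb_le_one {Ω : Type*} {m0 : MeasurableSpace Ω} {μ : Measure Ω}
    [IsProbabilityMeasure μ] {m : MeasurableSpace Ω} (hm : m ≤ m0) {A : Set Ω}
    (hint : Integrable (A.indicator fun _ => (1 : ℝ)) μ) :
    ∀ᵐ ω ∂μ, condProb μ m A ω ≤ 1 := by
  have h := condExp_mono (m := m) hint (integrable_const (1 : ℝ))
    (Eventually.of_forall fun ω =>
      Set.indicator_le_self' (fun _ _ => zero_le_one) ω)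
  rw [condExp_const hm] at h
  exact h

lemma tendsto_seq_toEndpoint (c : ℝ) :
    Tendsto (fun k : ℕ => c - 1 / (k + 1)) atTop (toEndpoint (c : EReal)) := by
  rw [toEndpoint, tendsto_comap_iff, tendsto_nhdsWithin_iff]
  constructor
  · have h1 : Tendsto (fun k : ℕ => c - 1 / ((k : ℝ) + 1)) atTop (𝓝 c) := by
      have := (tendsto_const_nhds (x := c) (f := atTop (α := ℕ))).sub
        tendsto_one_div_add_atTop_nhds_zero_nat
      simpa using this
    exact (continuous_coe_real_ereal.tendsto c).comp h1
  · refine Eventually.of_forall fun k => ?_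
    show ((c - 1 / ((k : ℝ) + 1) : ℝ) : EReal) ∈ Iio (c : EReal)
    rw [mem_Iio, EReal.coe_lt_coe_iff]
    have : (0 : ℝ) < 1 / ((k : ℝ) + 1) := by positivity
    linarith

/-- if the severity condition holds (in particular if `F` is tail `ℬ`-calibrated),
then `P(Y = x_Y) = 0`. -/
theorem no_atom_at_endpoint
    {Ω : Type*} (m : MeasurableSpace Ω) {m0 : MeasurableSpace Ω} (μ : Measure Ω) [IsProbabilityMeasure μ]
    (hm : m ≤ m0)
    (F : Ω → ℝ → ℝ) (Y : Ω → ℝ) (hY : Measurable Y)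
    (hF : IsRandomCdf μ F)
    (hEnd : EndpointAssumption μ m Y)
    (hSev : ∀ u ∈ Icc (0 : ℝ) 1, ∀ᵐ ω ∂μ,
      Tendsto (fun t : ℝ =>
          condProb μ m {ω' | excessPIT F Y t ω' ≤ u ∧ t < Y ω'} ω /
            condProb μ m {ω' | t < Y ω'} ω)
        (toEndpoint (upperEndpoint μ Y)) (𝓝 u)) :
    μ {ω | (Y ω : EReal) = upperEndpoint μ Y} = 0 := by
  haveI : IsFiniteMeasure (μ.trim hm) := isFiniteMeasure_trim hm
  have hY0 : Measurable[m0] Y := hY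
  by_cases hbot : upperEndpoint μ Y = ⊥
  · rw [hbot]
    convert measure_empty (μ := μ)
    ext ω; simp [EReal.coe_ne_bot]
  by_cases htop : upperEndpoint μ Y = ⊤
  · rw [htop]
    convert measure_empty (μ := μ)
    ext ω; simp [EReal.coe_ne_top]
  obtain ⟨c, hc⟩ : ∃ c : ℝ, upperEndpoint μ Y = (c : EReal) :=
    ⟨(upperEndpoint μ Y).toReal, (EReal.coe_toReal htop hbot).symm⟩
  obtain ⟨hEnd1, -⟩ := hEnd
  rw [hc] at hEnd1 hSev ⊢
  have hgoal : {ω | (Y ω : EReal) = (c : EReal)} = {ω | Y ω = c} := by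
    ext ω; simp [EReal.coe_eq_coe_iff]
  rw [hgoal]
  -- setup
  have hA : MeasurableSet[m0] {ω | Y ω = c} := hY0 (measurableSet_singleton c)
  have hFcm : MeasurableSet[m0] {ω | F ω c < 1} := measurableSet_lt (hF.1 c) measurable_const
  set A₀ : Set Ω := {ω | Y ω = c} ∩ {ω | F ω c < 1} with hA₀def
  set A₁ : Set Ω := {ω | Y ω = c} ∩ {ω | F ω c < 1}ᶜ with hA₁def
  have hA₀ : MeasurableSet[m0] A₀ := hA.inter hFcm
  have hA₁ : MeasurableSet[m0] A₁ := hA.inter hFcm.compl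
  obtain ⟨g, hgmeas, hgae⟩ := exists_meas_FY F Y hY0 hF.1 hF.2
  set t_ : ℕ → ℝ := fun k => c - 1 / ((k : ℝ) + 1) with ht_def
  have ht_lt : ∀ k, t_ k < c := by
    intro k
    have h : (0 : ℝ) < 1 / ((k : ℝ) + 1) := by positivity
    simp only [ht_def]
    linarith
  have hseq : Tendsto t_ atTop (toEndpoint (c : EReal)) := tendsto_seq_toEndpoint c
  have hint : ∀ {s : Set Ω}, MeasurableSet[m0] s → Integrable (s.indicator fun _ => (1 : ℝ)) μ :=
    fun hs => (integrable_const (1 : ℝ)).indicator hs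
  have hYtm : ∀ t : ℝ, MeasurableSet[m0] {ω' | t < Y ω'} :=
    fun t => measurableSet_lt measurable_const hY0
  have hDle : ∀ t : ℝ, ∀ᵐ ω ∂μ, condProb μ m {ω' | t < Y ω'} ω ≤ 1 :=
    fun t => condProb_le_one hm (hint (hYtm t))
  have hDpos : ∀ k : ℕ, ∀ᵐ ω ∂μ, 0 < condProb μ m {ω' | t_ k < Y ω'} ω :=
    fun k => hEnd1 (t_ k) (EReal.coe_lt_coe_iff.mpr (ht_lt k))
  -- integrability of the severity numerator indicator
  have hSint : ∀ t u : ℝ,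
      Integrable ({ω' | excessPIT F Y t ω' ≤ u ∧ t < Y ω'}.indicator fun _ => (1 : ℝ)) μ := by
    intro t u
    have hhm : Measurable[m0] fun ω => if F ω t < 1 then (g ω - F ω t) / (1 - F ω t) else 1 :=
      Measurable.ite (measurableSet_lt (hF.1 t) measurable_const)
        ((hgmeas.sub (hF.1 t)).div (measurable_const.sub (hF.1 t))) measurable_const
    have hT : MeasurableSet[m0]
        {ω | (if F ω t < 1 then (g ω - F ω t) / (1 - F ω t) else 1) ≤ u ∧ t < Y ω} :=
      (measurableSet_le hhm measurable_const).inter (hYtm t)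
    refine (hint hT).congr ?_
    filter_upwards [hgae] with ω hgω
    have hz : excessPIT F Y t ω = if F ω t < 1 then (g ω - F ω t) / (1 - F ω t) else 1 := by
      simp only [excessPIT, excessCdf, sub_add_cancel, hgω]
    simp only [Set.indicator_apply, mem_setOf_eq, hz]
  -- Step A₁ : the part of the atom where F·c = 1
  have key1 : ∀ ε : ℝ, 0 < ε → ε < 1 → (μ A₁).toReal ≤ ε := by
    intro ε hε0 hε1
    have hlim := hSev (1 - ε) ⟨by linarith, by linarith⟩
    have hki : ∀ k : ℕ, ∀ᵐ ω ∂μ,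
        condProb μ m {ω' | excessPIT F Y (t_ k) ω' ≤ (1 - ε) ∧ t_ k < Y ω'} ω ≤
          condProb μ m {ω' | t_ k < Y ω'} ω - condProb μ m A₁ ω := by
      intro k
      have hmono1 : ({ω' | excessPIT F Y (t_ k) ω' ≤ (1 - ε) ∧ t_ k < Y ω'}.indicator
            fun _ => (1 : ℝ))
          ≤ᵐ[μ] ({ω' | t_ k < Y ω'}.indicator fun _ => (1 : ℝ)) -
            (A₁.indicator fun _ => (1 : ℝ)) := by
        filter_upwards [hF.2] with ω hω
        obtain ⟨hmo, hco, hto, -⟩ := hω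
        by_cases hmem : ω ∈ A₁
        · have hYc : Y ω = c := hmem.1
          have hFc1 : F ω c = 1 := le_antisymm (hmo.ge_of_tendsto hto c) (not_lt.mp hmem.2)
          have hZ : excessPIT F Y (t_ k) ω = 1 := by
            simp only [excessPIT, excessCdf, hYc, sub_add_cancel, hFc1]
            split
            · rename_i hlt
              rw [div_self (sub_ne_zero.mpr (ne_of_lt hlt).symm)]
            · rfl
          have hnS : ω ∉ {ω' | excessPIT F Y (t_ k) ω' ≤ (1 - ε) ∧ t_ k < Y ω'} := by
            intro hS
            have := hS.1
            rw [hZ] at this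
            linarith
          have hYt : ω ∈ {ω' | t_ k < Y ω'} := by
            simp only [mem_setOf_eq, hYc]
            exact ht_lt k
          simp [Set.indicator_apply, hnS, hmem, hYt]
        · have hss : {ω' | excessPIT F Y (t_ k) ω' ≤ (1 - ε) ∧ t_ k < Y ω'} ⊆
              {ω' | t_ k < Y ω'} := fun _ h => h.2
          simp only [Pi.sub_apply, Set.indicator_of_notMem hmem, sub_zero]
          by_cases hS : ω ∈ {ω' | excessPIT F Y (t_ k) ω' ≤ (1 - ε) ∧ t_ k < Y ω'}
          · rw [Set.indicator_of_mem hS, Set.indicator_of_mem (hss hS)]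
          · rw [Set.indicator_of_notMem hS]
            exact Set.indicator_nonneg (fun _ _ => zero_le_one) ω
      have h1 := condExp_mono (m := m) (hSint (t_ k) (1 - ε))
        ((hint (hYtm (t_ k))).sub (hint hA₁)) hmono1
      have h2 := condExp_sub (m := m) (hint (hYtm (t_ k))) (hint hA₁)
      filter_upwards [h1, h2] with ω h1ω h2ω
      simp only [condProb]
      calc (μ[{ω' | excessPIT F Y (t_ k) ω' ≤ (1 - ε) ∧ t_ k < Y ω'}.indicator
            fun _ => (1 : ℝ)|m]) ω
          ≤ (μ[({ω' | t_ k < Y ω'}.indicator fun _ => (1 : ℝ)) -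
              (A₁.indicator fun _ => (1 : ℝ))|m]) ω := h1ω
        _ = (μ[{ω' | t_ k < Y ω'}.indicator fun _ => (1 : ℝ)|m]) ω -
              (μ[A₁.indicator fun _ => (1 : ℝ)|m]) ω := by
            rw [h2ω]; simp
    have hfinal : ∀ᵐ ω ∂μ, condProb μ m A₁ ω ≤ ε := by
      filter_upwards [hlim, ae_all_iff.mpr hki, ae_all_iff.mpr hDpos,
        ae_all_iff.mpr (fun k => hDle (t_ k)), condProb_nonneg μ m A₁]
        with ω hlimω hkiω hDposω hDleω hp0ω
      have hratio : ∀ k : ℕ,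
          condProb μ m {ω' | excessPIT F Y (t_ k) ω' ≤ (1 - ε) ∧ t_ k < Y ω'} ω /
            condProb μ m {ω' | t_ k < Y ω'} ω ≤ 1 - condProb μ m A₁ ω := by
        intro k
        rw [div_le_iff₀ (hDposω k)]
        nlinarith [hkiω k, hDleω k, hp0ω, (hDposω k).le]
      have hcomp : Tendsto (fun k =>
          condProb μ m {ω' | excessPIT F Y (t_ k) ω' ≤ (1 - ε) ∧ t_ k < Y ω'} ω /
            condProb μ m {ω' | t_ k < Y ω'} ω) atTop (𝓝 (1 - ε)) := hlimω.comp hseq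
      have hle := le_of_tendsto hcomp (Eventually.of_forall hratio)
      linarith
    have hintegral := integral_mono_ae (μ := μ) (f := condProb μ m A₁) (g := fun _ => ε)
      (integrable_condExp (f := A₁.indicator fun _ => (1 : ℝ)) (m := m))
      (integrable_const ε) hfinal
    have heq : ∫ ω, condProb μ m A₁ ω ∂μ = (μ A₁).toReal := by
      simp only [condProb]
      rw [integral_condExp hm, @integral_indicator_const Ω ℝ m0 _ _ μ _ (1 : ℝ) _ hA₁]
      simp [Measure.real]
    rw [heq, integral_const] at hintegral
    simpa using hintegral
  have hμA₁ : μ A₁ = 0 := by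
    have h0 : (μ A₁).toReal ≤ 0 := by
      by_contra hcon
      push_neg at hcon
      have h1 := key1 (min ((μ A₁).toReal / 2) (1 / 2))
        (by positivity) (by
          have := min_le_right ((μ A₁).toReal / 2) (1 / 2)
          linarith)
      have h2 := min_le_left ((μ A₁).toReal / 2) (1 / 2)
      linarith
    have := (ENNReal.toReal_eq_zero_iff _).mp (le_antisymm h0 ENNReal.toReal_nonneg)
    rcases this with h | h
    · exact h
    · exact absurd h (measure_ne_top μ A₁)
  -- Step A₀ : the part of the atom where F·c < 1
  have key0 : ∀ ε : ℝ, 0 < ε → ε < 1 → (μ A₀).toReal ≤ ε := by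
    intro ε hε0 hε1
    have hlim := hSev ε ⟨hε0.le, hε1.le⟩
    set B : ℕ → Set Ω := fun n =>
      A₀ ∩ ⋂ (k : ℕ) (_ : n ≤ k), {ω | excessCdf (F ω) (t_ k) (c - t_ k) ≤ ε} with hBdef
    have hBm : ∀ n, MeasurableSet[m0] (B n) := by
      intro n
      refine hA₀.inter (MeasurableSet.iInter fun k => MeasurableSet.iInter fun _ => ?_)
      have hcdfm : Measurable[m0] fun ω => excessCdf (F ω) (t_ k) (c - t_ k) :=
        Measurable.ite (measurableSet_lt (hF.1 (t_ k)) measurable_const)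
          (((hF.1 (c - t_ k + t_ k)).sub (hF.1 (t_ k))).div
            (measurable_const.sub (hF.1 (t_ k)))) measurable_const
      exact measurableSet_le hcdfm measurable_const
    have hBmono : Monotone B := by
      intro a b hab
      refine Set.inter_subset_inter_right _ ?_
      intro ω hω
      simp only [Set.mem_iInter] at hω ⊢
      intro k hk
      exact hω k (hab.trans hk)
    -- for k ≥ n, B n ⊆ numerator set
    have hBsub : ∀ n k : ℕ, n ≤ k →
        B n ⊆ {ω' | excessPIT F Y (t_ k) ω' ≤ ε ∧ t_ k < Y ω'} := by
      intro n k hnk ω hω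
      have hYc : Y ω = c := hω.1.1
      have hcdf : excessCdf (F ω) (t_ k) (c - t_ k) ≤ ε := by
        have := hω.2
        simp only [Set.mem_iInter] at this
        exact this k hnk
      constructor
      · show excessPIT F Y (t_ k) ω ≤ ε
        simpa only [excessPIT, hYc] using hcdf
      · show t_ k < Y ω
        rw [hYc]; exact ht_lt k
    have hkn : ∀ n : ℕ, ∀ᵐ ω ∂μ, condProb μ m (B n) ω ≤ ε := by
      intro n
      have hki : ∀ k : ℕ, n ≤ k → ∀ᵐ ω ∂μ, condProb μ m (B n) ω ≤
          condProb μ m {ω' | excessPIT F Y (t_ k) ω' ≤ ε ∧ t_ k < Y ω'} ω :=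
        fun k hk => condExp_mono (m := m) (hint (hBm n)) (hSint (t_ k) ε)
          (Eventually.of_forall fun ω => by
            by_cases hB : ω ∈ B n
            · rw [Set.indicator_of_mem hB, Set.indicator_of_mem (hBsub n k hk hB)]
            · rw [Set.indicator_of_notMem hB]
              exact Set.indicator_nonneg (fun _ _ => zero_le_one) ω)
      have hkiall : ∀ᵐ ω ∂μ, ∀ k : ℕ, n ≤ k → condProb μ m (B n) ω ≤
          condProb μ m {ω' | excessPIT F Y (t_ k) ω' ≤ ε ∧ t_ k < Y ω'} ω := by
        rw [ae_all_iff]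
        intro k
        rw [ae_all_iff]
        exact fun hk => hki k hk
      filter_upwards [hlim, hkiall, ae_all_iff.mpr hDpos,
        ae_all_iff.mpr (fun k => hDle (t_ k)), condProb_nonneg μ m (B n)]
        with ω hlimω hkiω hDposω hDleω hb0ω
      have hratio : ∀ k : ℕ, n ≤ k → condProb μ m (B n) ω ≤
          condProb μ m {ω' | excessPIT F Y (t_ k) ω' ≤ ε ∧ t_ k < Y ω'} ω /
            condProb μ m {ω' | t_ k < Y ω'} ω := by
        intro k hk
        rw [le_div_iff₀ (hDposω k)]
        nlinarith [hkiω k hk, hDleω k, (hDposω k).le]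
      have hcomp : Tendsto (fun k =>
          condProb μ m {ω' | excessPIT F Y (t_ k) ω' ≤ ε ∧ t_ k < Y ω'} ω /
            condProb μ m {ω' | t_ k < Y ω'} ω) atTop (𝓝 ε) := hlimω.comp hseq
      exact ge_of_tendsto hcomp (eventually_atTop.mpr ⟨n, hratio⟩)
    have hBn_le : ∀ n : ℕ, (μ (B n)).toReal ≤ ε := by
      intro n
      have hintegral := integral_mono_ae (μ := μ) (f := condProb μ m (B n)) (g := fun _ => ε)
        (integrable_condExp (f := (B n).indicator fun _ => (1 : ℝ)) (m := m))
        (integrable_const ε) (hkn n)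
      have heq : ∫ ω, condProb μ m (B n) ω ∂μ = (μ (B n)).toReal := by
        simp only [condProb]
        rw [integral_condExp hm, @integral_indicator_const Ω ℝ m0 _ _ μ _ (1 : ℝ) _ (hBm n)]
        simp [Measure.real]
      rw [heq, integral_const] at hintegral
      simpa using hintegral
    -- A₀ is a.e. contained in the union of the B n
    have hsub : ∀ᵐ ω ∂μ, ω ∈ A₀ → ω ∈ ⋃ n, B n := by
      filter_upwards [hF.2] with ω hω hmem
      obtain ⟨hmo, hco, -, -⟩ := hω
      have hYc : Y ω = c := hmem.1
      have hFc : F ω c < 1 := hmem.2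
      have htc : Tendsto t_ atTop (𝓝 c) := by
        rw [ht_def]
        have := (tendsto_const_nhds (x := c) (f := atTop (α := ℕ))).sub
          tendsto_one_div_add_atTop_nhds_zero_nat
        simpa using this
      have hcv : Tendsto (fun k => F ω (t_ k)) atTop (𝓝 (F ω c)) :=
        (hco.tendsto c).comp htc
      have h1 : ∀ᶠ k in atTop, F ω (t_ k) < 1 := hcv.eventually_lt_const hFc
      have hden : Tendsto (fun k => 1 - F ω (t_ k)) atTop (𝓝 (1 - F ω c)) :=
        tendsto_const_nhds.sub hcv
      have hne : (1 : ℝ) - F ω c ≠ 0 := sub_ne_zero.mpr (ne_of_gt hFc)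
      have hnum : Tendsto (fun k => F ω c - F ω (t_ k)) atTop (𝓝 0) := by
        have := tendsto_const_nhds (x := F ω c) (f := atTop (α := ℕ)) |>.sub hcv
        simpa using this
      have hrat : Tendsto (fun k => (F ω c - F ω (t_ k)) / (1 - F ω (t_ k))) atTop (𝓝 0) := by
        have := hnum.div hden hne
        rw [zero_div] at this
        exact this
      have h2 : ∀ᶠ k in atTop, (F ω c - F ω (t_ k)) / (1 - F ω (t_ k)) ≤ ε :=
        hrat.eventually_le_const hε0
      have h3 : ∀ᶠ k in atTop, excessCdf (F ω) (t_ k) (c - t_ k) ≤ ε := by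
        filter_upwards [h1, h2] with k h1k h2k
        rw [excessCdf, if_pos h1k, sub_add_cancel]
        exact h2k
      obtain ⟨n, hn⟩ := eventually_atTop.mp h3
      refine Set.mem_iUnion.mpr ⟨n, hmem, ?_⟩
      simp only [Set.mem_iInter]
      exact fun k hk => hn k hk
    have hA₀le : μ A₀ ≤ μ (⋃ n, B n) := measure_mono_ae hsub
    have hUle : μ (⋃ n, B n) ≤ ENNReal.ofReal ε := by
      refine le_of_tendsto (tendsto_measure_iUnion_atTop hBmono) ?_
      refine Eventually.of_forall fun n => ?_
      exact (ENNReal.le_ofReal_iff_toReal_le (measure_ne_top μ _) hε0.le).mpr (hBn_le n)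
    calc (μ A₀).toReal ≤ (ENNReal.ofReal ε).toReal :=
          ENNReal.toReal_mono ENNReal.ofReal_ne_top (hA₀le.trans hUle)
      _ = ε := ENNReal.toReal_ofReal hε0.le
  have hμA₀ : μ A₀ = 0 := by
    have h0 : (μ A₀).toReal ≤ 0 := by
      by_contra hcon
      push_neg at hcon
      have h1 := key0 (min ((μ A₀).toReal / 2) (1 / 2))
        (by positivity) (by
          have := min_le_right ((μ A₀).toReal / 2) (1 / 2)
          linarith)
      have h2 := min_le_left ((μ A₀).toReal / 2) (1 / 2)
      linarith
    have := (ENNReal.toReal_eq_zero_iff _).mp (le_antisymm h0 ENNReal.toReal_nonneg)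
    rcases this with h | h
    · exact h
    · exact absurd h (measure_ne_top μ A₀)
  -- conclude
  have hcover : {ω | Y ω = c} ⊆ A₀ ∪ A₁ := by
    intro ω hω
    by_cases hf : F ω c < 1
    · exact Or.inl ⟨hω, hf⟩
    · exact Or.inr ⟨hω, hf⟩
  have hle := (measure_mono hcover).trans (measure_union_le (μ := μ) A₀ A₁)
  rw [hμA₀, hμA₁] at hle
  exact le_antisymm (by simpa using hle) zero_le
end
end

section
/- Suppose the endpoint assumption holds for σ(F) and for the trivial σ-algebra, and suppose F is tail auto-calibrated for Y (i.e. tail σ(F)-calibrated) with the defining convergence holding in L^∞: for every u ∈ [0,1], the essential supremum of |P(Z_F^{(t)} ≤ u, Y > t | F)/(1 − F(t)) − u| tends to 0 as t → x_Y. Then F is probabilistically tail calibrated for Y: E[1 − F(t)] > 0 for all t < x_Y and, for every u ∈ [0,1], P(Z_F^{(t)} ≤ u, Y > t)/E[1 − F(t)] → u as t → x_Y. -/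
open MeasureTheory ProbabilityTheory Filter Set Topology

noncomputable section

/-- The σ-algebra generated by the random forecast `F`. -/
def sigmaOfForecast {Ω : Type*} (F : Ω → ℝ → ℝ) : MeasurableSpace Ω :=
  MeasurableSpace.comap F inferInstance

/-! By the tower property, `P(Z_F^{(t)} ≤ u, Y > t)` is the mean of the conditional probability
`p_t = P(Z_F^{(t)} ≤ u, Y > t | F)`. The `L^∞` bound `|p_t / (1 - F(t)) - u| ≤ ε_t` a.s.
becomes `|p_t - u (1 - F(t))| ≤ ε_t (1 - F(t))`, which integrates to
`|P(Z_F^{(t)} ≤ u, Y > t) - u E[1 - F(t)]| ≤ ε_t E[1 - F(t)]`, and `ε_t → 0`. -/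

section

variable {Ω : Type*} {m m0 : MeasurableSpace Ω} {μ : Measure Ω}

theorem aemeasurable_apply_of_ae_continuous {F : Ω → ℝ → ℝ}
    (hmeas : ∀ x, Measurable fun ω => F ω x) (hcont : ∀ᵐ ω ∂μ, Continuous (F ω))
    {Y : Ω → ℝ} (hY : Measurable Y) : AEMeasurable (fun ω => F ω (Y ω)) μ := by
  set N := toMeasurable μ {ω | ¬Continuous (F ω)}
  -- Zeroing `F` on a measurable null set makes it a Carathéodory function.
  let G : ℝ → Ω → ℝ := fun x => Nᶜ.indicator fun ω => F ω x
  have hG : Measurable (Function.uncurry G) := by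
    refine measurable_uncurry_of_continuous_of_measurable (fun ω => ?_)
      fun x => (hmeas x).indicator (measurableSet_toMeasurable _ _).compl
    by_cases hω : ω ∈ N
    · simpa [G, hω] using continuous_const
    · have : Continuous (F ω) := by_contra fun h => hω (subset_toMeasurable _ _ h)
      simpa [G, hω] using this
  have hN : ∀ᵐ ω ∂μ, ω ∉ N :=
    measure_eq_zero_iff_ae_notMem.mp ((measure_toMeasurable _).trans (ae_iff.mp hcont))
  refine ⟨fun ω => G (Y ω) ω, hG.comp (hY.prodMk measurable_id), ?_⟩
  filter_upwards [hN] with ω hω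
  simp [G, hω]

theorem integral_pos_of_ae_pos [NeZero μ] {f : Ω → ℝ} (hfi : Integrable f μ)
    (hf : ∀ᵐ ω ∂μ, 0 < f ω) : 0 < ∫ ω, f ω ∂μ := by
  rw [integral_pos_iff_support_of_nonneg_ae (hf.mono fun _ h => h.le) hfi,
    measure_congr
      (eventuallyEq_univ.mpr (hf.mono fun _ h => h.ne') : Function.support f =ᵐ[μ] univ)]
  exact Measure.measure_univ_pos.mpr (NeZero.ne μ)

theorem measure_toReal_eq_integral_condProb [IsFiniteMeasure μ]
    (hm : m ≤ m0) {A : Set Ω} (hA : NullMeasurableSet A μ) :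
    (μ A).toReal = ∫ ω, condProb μ m A ω ∂μ := by
  rw [condProb, integral_condExp hm, integral_indicator₀ hA, setIntegral_const, smul_eq_mul,
    mul_one, measureReal_def]

theorem abs_integral_div_integral_sub_le_eLpNorm_top {c w : Ω → ℝ}
    (hc : Integrable c μ) (hw : Integrable w μ) (hw_pos : ∀ᵐ ω ∂μ, 0 < w ω)
    (hI : 0 < ∫ ω, w ω ∂μ) (u : ℝ)
    (hfin : eLpNorm (fun ω => c ω / w ω - u) ⊤ μ ≠ ⊤) :
    |(∫ ω, c ω ∂μ) / (∫ ω, w ω ∂μ) - u| ≤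
      (eLpNorm (fun ω => c ω / w ω - u) ⊤ μ).toReal := by
  set ε := (eLpNorm (fun ω => c ω / w ω - u) ⊤ μ).toReal
  have hbound : ∀ᵐ ω ∂μ, ‖c ω - u * w ω‖ ≤ ε * w ω := by
    filter_upwards [hw_pos, ae_le_eLpNormEssSup (f := fun ω => c ω / w ω - u) (μ := μ)]
      with ω hwω hω
    have hω' : |c ω / w ω - u| ≤ ε := by
      rw [← eLpNorm_exponent_top] at hω
      simpa [Real.norm_eq_abs] using! ENNReal.toReal_mono hfin hω
    calc ‖c ω - u * w ω‖ = |(c ω / w ω - u) * w ω| := by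
          rw [sub_mul, div_mul_cancel₀ _ hwω.ne', mul_comm, Real.norm_eq_abs]
      _ = |c ω / w ω - u| * w ω := by rw [abs_mul, abs_of_pos hwω]
      _ ≤ ε * w ω := mul_le_mul_of_nonneg_right hω' hwω.le
  have hnum : |(∫ ω, c ω ∂μ) - u * ∫ ω, w ω ∂μ| ≤ ε * ∫ ω, w ω ∂μ := by
    rw [← integral_const_mul, ← integral_sub hc (hw.const_mul u), ← integral_const_mul]
    exact norm_integral_le_of_norm_le (hw.const_mul ε) hbound
  rwa [div_sub' hI.ne', abs_div, abs_of_pos hI, div_le_iff₀ hI, mul_comm (∫ ω, w ω ∂μ) u]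

namespace IsRandomCdf

variable {F : Ω → ℝ → ℝ} (hF : IsRandomCdf μ F)
include hF

theorem integrable_one_sub [IsFiniteMeasure μ] (t : ℝ) :
    Integrable (fun ω => 1 - F ω t) μ := by
  refine (integrable_const (1 : ℝ)).mono' (measurable_const.sub (hF.1 t)).aestronglyMeasurable ?_
  filter_upwards [hF.2] with ω ⟨hmono, _, htop, hbot⟩
  rw [Real.norm_eq_abs, abs_le]
  constructor <;> linarith [hmono.le_of_tendsto hbot t, hmono.ge_of_tendsto htop t]

theorem aemeasurable_excessPIT {Y : Ω → ℝ} (hY : Measurable Y) (t : ℝ) :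
    AEMeasurable (excessPIT F Y t) μ := by
  obtain ⟨G, hG, hFG⟩ :=
    aemeasurable_apply_of_ae_continuous hF.1 (hF.2.mono fun _ h => h.2.1) hY
  refine ⟨fun ω => if F ω t < 1 then (G ω - F ω t) / (1 - F ω t) else 1, ?_, ?_⟩
  · exact Measurable.ite (measurableSet_lt (hF.1 t) measurable_const)
      ((hG.sub (hF.1 t)).div (measurable_const.sub (hF.1 t))) measurable_const
  · filter_upwards [hFG] with ω hω
    simp only [excessPIT, excessCdf, sub_add_cancel, hω]

end IsRandomCdf

end

theorem eventually_lt_toEndpoint (e : EReal) : ∀ᶠ t : ℝ in toEndpoint e, (t : EReal) < e :=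
  preimage_mem_comap self_mem_nhdsWithin

theorem tailAuto_implies_probTail_general
    {Ω : Type*} {m0 : MeasurableSpace Ω} (μ : Measure Ω) [IsProbabilityMeasure μ]
    (F : Ω → ℝ → ℝ) (Y : Ω → ℝ) (hY : Measurable Y)
    (hF : IsRandomCdf μ F) (hσF : sigmaOfForecast F ≤ m0)
    (hpos : ∀ t : ℝ, (t : EReal) < upperEndpoint μ Y → ∀ᵐ ω ∂μ, 0 < 1 - F ω t)
    (hLinf : ∀ u ∈ Icc (0 : ℝ) 1,
      Tendsto (fun t : ℝ =>
          eLpNorm (fun ω =>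
              condProb μ (sigmaOfForecast F) {ω' | excessPIT F Y t ω' ≤ u ∧ t < Y ω'} ω /
                (1 - F ω t) - u) ⊤ μ)
        (toEndpoint (upperEndpoint μ Y)) (𝓝 0)) :
    ProbTailCalibrated μ F Y := by
  have hIpos : ∀ t : ℝ, (t : EReal) < upperEndpoint μ Y → 0 < ∫ ω, (1 - F ω t) ∂μ :=
    fun t ht => integral_pos_of_ae_pos (hF.integrable_one_sub t) (hpos t ht)
  refine ⟨hIpos, fun u hu => ?_⟩
  rw [← tendsto_sub_nhds_zero_iff]
  have hL := hLinf u hu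
  refine squeeze_zero_norm' ?_
    (by simpa using (ENNReal.tendsto_toReal ENNReal.zero_ne_top).comp hL)
  filter_upwards [eventually_lt_toEndpoint _, hL.eventually_lt_const ENNReal.zero_lt_top]
    with t ht hfin
  have hA : NullMeasurableSet {ω | excessPIT F Y t ω ≤ u ∧ t < Y ω} μ :=
    ((hF.aemeasurable_excessPIT hY t).nullMeasurable measurableSet_Iic).inter
      (hY measurableSet_Ioi).nullMeasurableSet
  rw [measure_toReal_eq_integral_condProb hσF hA, Real.norm_eq_abs]
  exact abs_integral_div_integral_sub_le_eLpNorm_top integrable_condExp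
    (hF.integrable_one_sub t) (hpos t ht) (hIpos t ht) u hfin.ne

/-- tail auto-calibration with convergence in `L^∞` implies probabilistic tail
calibration. -/
theorem tailAuto_implies_probTail
    {Ω : Type*} {m0 : MeasurableSpace Ω} (μ : Measure Ω) [IsProbabilityMeasure μ]
    (F : Ω → ℝ → ℝ) (Y : Ω → ℝ) (hY : Measurable Y)
    (hF : IsRandomCdf μ F) (hσF : sigmaOfForecast F ≤ m0)
    (hEndF : EndpointAssumption μ (sigmaOfForecast F) Y)
    (hEndTriv : EndpointAssumption μ (⊥ : MeasurableSpace Ω) Y)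
    (hpos : ∀ t : ℝ, (t : EReal) < upperEndpoint μ Y → ∀ᵐ ω ∂μ, 0 < 1 - F ω t)
    (hcal : ∀ u ∈ Icc (0 : ℝ) 1, ∀ᵐ ω ∂μ,
      Tendsto (fun t : ℝ =>
          condProb μ (sigmaOfForecast F) {ω' | excessPIT F Y t ω' ≤ u ∧ t < Y ω'} ω /
            (1 - F ω t))
        (toEndpoint (upperEndpoint μ Y)) (𝓝 u))
    (hLinf : ∀ u ∈ Icc (0 : ℝ) 1,
      Tendsto (fun t : ℝ =>
          eLpNorm (fun ω =>
              condProb μ (sigmaOfForecast F) {ω' | excessPIT F Y t ω' ≤ u ∧ t < Y ω'} ω /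
                (1 - F ω t) - u) ⊤ μ)
        (toEndpoint (upperEndpoint μ Y)) (𝓝 0)) :
    ProbTailCalibrated μ F Y :=
  tailAuto_implies_probTail_general μ F Y hY hF hσF hpos hLinf
end
end

section
/- (i) If there exist ξ ∈ ℝ and σ_Y(t) > 0 such that for every fixed x ≥ 0, P(Y > t + σ_Y(t)x | Y > t) → (1 + ξx)_+^{−1/ξ} as t → x_Y, then the convergence is uniform: sup_{x ≥ 0} |P(Y > t + σ_Y(t)x | Y > t) − (1 + ξx)_+^{−1/ξ}| → 0 as t → x_Y. (ii) If there exist η ∈ ℝ and deterministic σ_F(t) > 0 such that for every fixed x ≥ 0 and ε > 0, P(|1 − F_t(σ_F(t)x) − (1 + ηx)_+^{−1/η}| > ε | Y > t) → 0 as t → x_F, then for every ε > 0, P(sup_{x ≥ 0} |1 − F_t(σ_F(t)x) − (1 + ηx)_+^{−1/η}| > ε | Y > t) → 0 as t → x_F. -/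
open MeasureTheory ProbabilityTheory Filter Set Topology

noncomputable section

section Aux

lemma myDiv_le {a b c : ℝ} (h : a ≤ b) (hc : 0 ≤ c) : a / c ≤ b / c := by
  rw [div_eq_mul_inv, div_eq_mul_inv]
  exact mul_le_mul_of_nonneg_right h (inv_nonneg.mpr hc)

lemma gpd_nonneg (ξ x : ℝ) : 0 ≤ gpdSurv ξ x := by
  unfold gpdSurv; split
  · exact (Real.exp_pos _).le
  · exact Real.rpow_nonneg (le_max_right _ _) _

lemma gpd_anti (ξ : ℝ) : AntitoneOn (gpdSurv ξ) (Ici 0) := by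
  intro x hx y hy hxy
  simp only [mem_Ici] at hx hy
  unfold gpdSurv
  rcases eq_or_ne ξ 0 with h | h
  · simp only [h, if_pos rfl]
    exact Real.exp_le_exp.mpr (neg_le_neg hxy)
  · simp only [if_neg h]
    rcases lt_or_gt_of_ne h with hneg | hpos
    · refine Real.rpow_le_rpow (le_max_right _ _) (max_le_max (by nlinarith) le_rfl) ?_
      exact div_nonneg_iff.mpr (Or.inr ⟨by norm_num, hneg.le⟩)
    · have h1 : (0:ℝ) < 1 + ξ * x := by nlinarith
      have h2 : 1 + ξ * x ≤ 1 + ξ * y := by nlinarith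
      rw [max_eq_left (by nlinarith), max_eq_left (by nlinarith)]
      exact Real.rpow_le_rpow_of_nonpos h1 h2
        (div_nonpos_iff.mpr (Or.inr ⟨by norm_num, hpos.le⟩))

lemma gpd_contOn (ξ : ℝ) : ContinuousOn (gpdSurv ξ) (Ici 0) := by
  rcases eq_or_ne ξ 0 with h | h
  · subst h
    have he : gpdSurv 0 = fun x => Real.exp (-x) := by
      funext x; unfold gpdSurv; rw [if_pos rfl]
    rw [he]
    exact (Real.continuous_exp.comp continuous_neg).continuousOn
  · have hu : gpdSurv ξ = fun x => max (1 + ξ * x) 0 ^ (-(1:ℝ)/ξ) := by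
      funext x; unfold gpdSurv; rw [if_neg h]
    rw [hu]
    have hbase : Continuous fun x : ℝ => max (1 + ξ * x) 0 :=
      (continuous_const.add (continuous_const.mul continuous_id)).max continuous_const
    intro x hx
    simp only [mem_Ici] at hx
    rcases lt_or_gt_of_ne h with hneg | hpos
    · exact (hbase.continuousAt.rpow_const
        (Or.inr (div_nonneg_iff.mpr (Or.inr ⟨by norm_num, hneg.le⟩)))).continuousWithinAt
    · have hne : max (1 + ξ * x) 0 ≠ 0 := by
        have : (0:ℝ) < 1 + ξ * x := by nlinarith
        rw [max_eq_left this.le]; exact this.ne'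
      exact (hbase.continuousAt.rpow_const (Or.inl hne)).continuousWithinAt

lemma gpd_tendsto (ξ : ℝ) : Tendsto (gpdSurv ξ) atTop (𝓝 0) := by
  rcases lt_trichotomy ξ 0 with hneg | h0 | hpos
  · apply Tendsto.congr' _ (tendsto_const_nhds (α := ℝ) (x := (0:ℝ)))
    filter_upwards [eventually_ge_atTop (-1/ξ)] with x hx
    have h1 : ξ * x ≤ ξ * (-1/ξ) := mul_le_mul_of_nonpos_left hx hneg.le
    have h2 : ξ * (-1/ξ) = -1 := by
      rw [← mul_div_assoc, mul_neg_one, neg_div, div_self hneg.ne]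
    have h3 : 1 + ξ * x ≤ 0 := by linarith
    have hq : (-1 : ℝ)/ξ ≠ 0 := by
      simp only [ne_eq, div_eq_zero_iff]; push_neg; exact ⟨by norm_num, hneg.ne⟩
    unfold gpdSurv
    rw [if_neg hneg.ne, max_eq_right h3, Real.zero_rpow hq]
  · subst h0
    have he : gpdSurv 0 = fun x => Real.exp (-x) := by
      funext x; unfold gpdSurv; rw [if_pos rfl]
    rw [he]
    exact Real.tendsto_exp_neg_atTop_nhds_zero
  · have h1 : Tendsto (fun x : ℝ => max (1 + ξ * x) 0) atTop atTop := by
      apply tendsto_atTop_mono (fun x => le_max_left _ _)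
      exact tendsto_atTop_add_const_left _ 1 (Tendsto.const_mul_atTop hpos tendsto_id)
    have h2 := (tendsto_rpow_neg_atTop (show (0:ℝ) < 1/ξ by positivity)).comp h1
    refine h2.congr fun x => ?_
    unfold gpdSurv
    rw [if_neg hpos.ne']
    simp [Function.comp, neg_div]

lemma gpd_grid (ξ ε : ℝ) (hε : 0 < ε) :
    ∃ (n : ℕ) (p : ℕ → ℝ), p 0 = 0 ∧ (∀ i, 0 ≤ p i) ∧ (∀ i, p i ≤ p (i + 1)) ∧
      (∀ i < n, gpdSurv ξ (p i) - gpdSurv ξ (p (i + 1)) ≤ ε) ∧ gpdSurv ξ (p n) ≤ ε := by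
  obtain ⟨M₀, hM₀⟩ := (Metric.tendsto_nhds.mp (gpd_tendsto ξ) ε hε).exists_forall_of_atTop
  set M : ℝ := max M₀ 0 with hMdef
  have hM : ∀ y : ℝ, M ≤ y → gpdSurv ξ y ≤ ε := by
    intro y hy
    have := hM₀ y (le_trans (le_max_left _ _) hy)
    rw [Real.dist_eq, sub_zero] at this
    exact (le_abs_self _).trans this.le
  have hM0 : (0:ℝ) ≤ M := le_max_right _ _
  have hc : UniformContinuousOn (gpdSurv ξ) (Icc 0 (M + 1)) :=
    (isCompact_Icc).uniformContinuousOn_of_continuous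
      ((gpd_contOn ξ).mono Icc_subset_Ici_self)
  obtain ⟨δ, hδ, hδ'⟩ := Metric.uniformContinuousOn_iff.mp hc ε hε
  set d : ℝ := min δ 1 / 2 with hddef
  have hd0 : 0 < d := by positivity
  have hd1 : d ≤ 1/2 := by
    rw [hddef]; exact myDiv_le (min_le_right _ _) two_pos.le
  have hdδ : d < δ := by
    calc d ≤ δ/2 := myDiv_le (min_le_left _ _) two_pos.le
      _ < δ := by linarith
  set n : ℕ := ⌈M / d⌉₊ with hndef
  have hub : (n : ℝ) * d ≤ M + 1 := by
    have h1 : (n : ℝ) < M / d + 1 := Nat.ceil_lt_add_one (by positivity)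
    have h2 : (n : ℝ) * d < (M / d + 1) * d := by
      exact mul_lt_mul_of_pos_right h1 hd0
    have h3 : (M / d + 1) * d = M + d := by field_simp
    linarith
  have hlb : M ≤ (n : ℝ) * d := by
    have h1 : M / d ≤ (n : ℝ) := Nat.le_ceil _
    calc M = M / d * d := by field_simp
      _ ≤ (n : ℝ) * d := mul_le_mul_of_nonneg_right h1 hd0.le
  refine ⟨n, fun i => (i : ℝ) * d, by simp, fun i => by positivity, fun i => ?_, ?_, ?_⟩
  · have : (i : ℝ) ≤ (i : ℝ) + 1 := by linarith
    push_cast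
    nlinarith
  · intro i hi
    have hin : ((i : ℝ) + 1) * d ≤ (n : ℝ) * d := by
      have : (i : ℝ) + 1 ≤ (n : ℝ) := by exact_mod_cast Nat.succ_le_of_lt hi
      nlinarith
    have hmem1 : (i : ℝ) * d ∈ Icc (0:ℝ) (M + 1) := by
      constructor
      · positivity
      · nlinarith [hin, hub, hd0.le]
    have hmem2 : ((i : ℝ) + 1) * d ∈ Icc (0:ℝ) (M + 1) := by
      constructor
      · positivity
      · linarith
    have hdist : dist ((i : ℝ) * d) (((i : ℝ) + 1) * d) < δ := by
      rw [Real.dist_eq]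
      have : (i : ℝ) * d - ((i : ℝ) + 1) * d = -d := by ring
      rw [this, abs_neg, abs_of_pos hd0]
      exact hdδ
    have := hδ' _ hmem1 _ hmem2 hdist
    rw [Real.dist_eq] at this
    have h4 : gpdSurv ξ ((i : ℝ) * d) - gpdSurv ξ (((i : ℝ) + 1) * d) ≤ ε :=
      (le_abs_self _).trans this.le
    push_cast
    exact h4
  · exact hM _ hlb

lemma chain_bound (G g : ℝ → ℝ) (ε : ℝ) (n : ℕ) (p : ℕ → ℝ)
    (hp0 : p 0 = 0) (hpnn : ∀ i, 0 ≤ p i)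
    (hGa : AntitoneOn G (Ici 0)) (hGnn : ∀ x, 0 ≤ x → 0 ≤ G x)
    (hstep : ∀ i < n, G (p i) - G (p (i + 1)) ≤ ε) (hend : G (p n) ≤ ε)
    (hga : AntitoneOn g (Ici 0)) (hgnn : ∀ x, 0 ≤ x → 0 ≤ g x)
    (hclose : ∀ i ≤ n, |g (p i) - G (p i)| ≤ ε) :
    ∀ x, 0 ≤ x → |g x - G x| ≤ 2 * ε := by
  intro x hx
  rcases le_or_gt (p n) x with hxn | hxn
  · have h1 : g x ≤ g (p n) := hga (mem_Ici.mpr (hpnn n)) (mem_Ici.mpr hx) hxn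
    have h2 : G x ≤ G (p n) := hGa (mem_Ici.mpr (hpnn n)) (mem_Ici.mpr hx) hxn
    have h3 := hclose n le_rfl
    rw [abs_le] at h3 ⊢
    have h4 := hgnn x hx
    have h5 := hGnn x hx
    constructor <;> linarith [h3.1, h3.2]
  · classical
    set P : ℕ → Prop := fun i => p i ≤ x with hPdef
    have hP0 : P 0 := by simp only [hPdef, hp0]; exact hx
    set i := Nat.findGreatest P n with hi
    have hPi : P i := Nat.findGreatest_spec (Nat.zero_le n) hP0
    have hile : i ≤ n := Nat.findGreatest_le n
    have hine : i ≠ n := by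
      intro h; rw [h] at hPi; exact absurd hPi (not_le.mpr hxn)
    have hilt : i < n := lt_of_le_of_ne hile hine
    have hPx : ¬ P (i + 1) :=
      Nat.findGreatest_is_greatest (Nat.lt_succ_self i) hilt
    have hx1 : x ≤ p (i + 1) := (not_le.mp hPx).le
    have hcl1 := hclose i hile
    have hcl2 := hclose (i + 1) hilt
    have hg1 : g x ≤ g (p i) := hga (mem_Ici.mpr (hpnn i)) (mem_Ici.mpr hx) hPi
    have hg2 : g (p (i + 1)) ≤ g x := hga (mem_Ici.mpr hx) (mem_Ici.mpr (hpnn _)) hx1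
    have hG1 : G x ≤ G (p i) := hGa (mem_Ici.mpr (hpnn i)) (mem_Ici.mpr hx) hPi
    have hG2 : G (p (i + 1)) ≤ G x := hGa (mem_Ici.mpr hx) (mem_Ici.mpr (hpnn _)) hx1
    have hs := hstep i hilt
    rw [abs_le] at hcl1 hcl2 ⊢
    constructor <;> linarith [hcl1.1, hcl1.2, hcl2.1, hcl2.2]

lemma excess_anti (F : ℝ → ℝ) (hmono : Monotone F) (hlim : Tendsto F atTop (𝓝 1))
    (t σ : ℝ) (hσ : 0 < σ) :
    AntitoneOn (fun x => 1 - excessCdf F t (σ * x)) (Ici 0) ∧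
      ∀ x : ℝ, 0 ≤ 1 - excessCdf F t (σ * x) := by
  have hle1 : ∀ x, F x ≤ 1 := fun x => hmono.ge_of_tendsto hlim x
  by_cases ht : F t < 1
  · have hpos : 0 < 1 - F t := by linarith
    constructor
    · intro a _ b _ hab
      simp only [excessCdf, if_pos ht]
      have h1 : F (σ * a + t) ≤ F (σ * b + t) := hmono (by nlinarith)
      have h2 : (F (σ * a + t) - F t) / (1 - F t) ≤ (F (σ * b + t) - F t) / (1 - F t) :=
        myDiv_le (by linarith) hpos.le
      linarith
    · intro x
      simp only [excessCdf, if_pos ht]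
      have h1 : (F (σ * x + t) - F t) / (1 - F t) ≤ 1 :=
        (div_le_one hpos).mpr (by linarith [hle1 (σ * x + t)])
      linarith
  · constructor
    · intro a _ b _ _
      simp [excessCdf, ht]
    · intro x
      simp [excessCdf, ht]

end Aux

/-- the pointwise generalized-Pareto limits (A1) and (A2) automatically hold
uniformly in `x ≥ 0`. -/
theorem gpd_convergence_uniform
    {Ω : Type*} {m0 : MeasurableSpace Ω} (μ : Measure Ω) [IsProbabilityMeasure μ]
    (F : Ω → ℝ → ℝ) (Y : Ω → ℝ) (hY : Measurable Y)
    (hF : IsRandomCdf μ F)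
    (ξ η : ℝ) (σY σF : ℝ → ℝ) (hσY : ∀ t, 0 < σY t) (hσF : ∀ t, 0 < σF t)
    (xF : EReal) (hxF : ∀ᵐ ω ∂μ, cdfEndpoint (F ω) = xF) :
    ((∀ x : ℝ, 0 ≤ x →
        Tendsto (fun t : ℝ =>
            (μ {ω | t + σY t * x < Y ω}).toReal / (μ {ω | t < Y ω}).toReal)
          (toEndpoint (upperEndpoint μ Y)) (𝓝 (gpdSurv ξ x))) →
      Tendsto (fun t : ℝ =>
          ⨆ x : Ici (0 : ℝ),
            |(μ {ω | t + σY t * (x : ℝ) < Y ω}).toReal / (μ {ω | t < Y ω}).toReal -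
              gpdSurv ξ (x : ℝ)|)
        (toEndpoint (upperEndpoint μ Y)) (𝓝 0)) ∧
    ((∀ x : ℝ, 0 ≤ x → ∀ ε : ℝ, 0 < ε →
        Tendsto (fun t : ℝ =>
            (μ {ω | t < Y ω ∧
                ε < |1 - excessCdf (F ω) t (σF t * x) - gpdSurv η x|}).toReal /
              (μ {ω | t < Y ω}).toReal)
          (toEndpoint xF) (𝓝 0)) →
      ∀ ε : ℝ, 0 < ε →
        Tendsto (fun t : ℝ =>
            (μ {ω | t < Y ω ∧
                ε < ⨆ x : Ici (0 : ℝ),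
                  |1 - excessCdf (F ω) t (σF t * (x : ℝ)) - gpdSurv η (x : ℝ)|}).toReal /
              (μ {ω | t < Y ω}).toReal)
          (toEndpoint xF) (𝓝 0)) := by
  constructor
  · -- Part (i)
    intro hpt
    rw [Metric.tendsto_nhds]
    intro ε hε
    obtain ⟨n, p, hp0, hpnn, hpm, hstep, hend⟩ := gpd_grid ξ (ε/3) (by positivity)
    have hev : ∀ᶠ t in toEndpoint (upperEndpoint μ Y),
        ∀ i ∈ Finset.range (n+1),
          |(μ {ω | t + σY t * p i < Y ω}).toReal / (μ {ω | t < Y ω}).toReal -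
            gpdSurv ξ (p i)| < ε/3 := by
      rw [eventually_all_finset]
      intro i _
      have h := Metric.tendsto_nhds.mp (hpt (p i) (hpnn i)) (ε/3) (by positivity)
      simpa [Real.dist_eq] using h
    filter_upwards [hev] with t ht
    have hclose : ∀ i ≤ n,
        |(fun x => (μ {ω | t + σY t * x < Y ω}).toReal / (μ {ω | t < Y ω}).toReal) (p i) -
          gpdSurv ξ (p i)| ≤ ε/3 := fun i hi =>
      (ht i (Finset.mem_range.mpr (Nat.lt_succ_of_le hi))).le
    have hanti : AntitoneOn
        (fun x => (μ {ω | t + σY t * x < Y ω}).toReal / (μ {ω | t < Y ω}).toReal) (Ici 0) := by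
      intro a _ b _ hab
      apply myDiv_le _ ENNReal.toReal_nonneg
      apply ENNReal.toReal_mono (measure_ne_top μ _)
      apply measure_mono
      intro ω hω
      simp only [mem_setOf_eq] at hω ⊢
      have : σY t * a ≤ σY t * b := mul_le_mul_of_nonneg_left hab (hσY t).le
      linarith
    have hbd := chain_bound (gpdSurv ξ)
      (fun x => (μ {ω | t + σY t * x < Y ω}).toReal / (μ {ω | t < Y ω}).toReal)
      (ε/3) n p hp0 hpnn (gpd_anti ξ) (fun x _ => gpd_nonneg ξ x) hstep hend
      hanti (fun x _ => by positivity) hclose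
    rw [Real.dist_eq, sub_zero,
      abs_of_nonneg (Real.iSup_nonneg fun x => abs_nonneg _)]
    have hsup : (⨆ x : Ici (0:ℝ), |(μ {ω | t + σY t * (x:ℝ) < Y ω}).toReal /
        (μ {ω | t < Y ω}).toReal - gpdSurv ξ (x:ℝ)|) ≤ 2 * (ε/3) :=
      Real.iSup_le (fun x => hbd (x:ℝ) (mem_Ici.mp x.2)) (by positivity)
    linarith
  · -- Part (ii)
    intro hpt ε hε
    obtain ⟨n, p, hp0, hpnn, hpm, hstep, hend⟩ := gpd_grid η (ε/3) (by positivity)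
    set Q : Ω → Prop := fun ω => Monotone (F ω) ∧ Continuous (F ω) ∧
      Tendsto (F ω) atTop (𝓝 1) ∧ Tendsto (F ω) atBot (𝓝 0) with hQdef
    have hN : μ {ω | ¬ Q ω} = 0 := ae_iff.mp hF.2
    set A : ℕ → ℝ → Set Ω := fun i t => {ω | t < Y ω ∧
      ε/3 < |1 - excessCdf (F ω) t (σF t * p i) - gpdSurv η (p i)|} with hAdef
    have hsub : ∀ t : ℝ,
        {ω | t < Y ω ∧ ε < ⨆ x : Ici (0:ℝ),
          |1 - excessCdf (F ω) t (σF t * (x:ℝ)) - gpdSurv η (x:ℝ)|} ⊆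
        {ω | ¬ Q ω} ∪ ⋃ i ∈ Finset.range (n+1), A i t := by
      intro t ω hω
      simp only [mem_setOf_eq] at hω
      by_cases hQ : Q ω
      · right
        simp only [mem_iUnion, Finset.mem_range]
        by_contra hcon
        push_neg at hcon
        have hclose : ∀ i ≤ n,
            |(fun x => 1 - excessCdf (F ω) t (σF t * x)) (p i) - gpdSurv η (p i)| ≤ ε/3 := by
          intro i hi
          have h := hcon i (Nat.lt_succ_of_le hi)
          simp only [hAdef, mem_setOf_eq, not_and, not_lt] at h
          exact h hω.1
        obtain ⟨hanti, hnn⟩ := excess_anti (F ω) hQ.1 hQ.2.2.1 t (σF t) (hσF t)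
        have hbd := chain_bound (gpdSurv η) (fun x => 1 - excessCdf (F ω) t (σF t * x))
          (ε/3) n p hp0 hpnn (gpd_anti η) (fun x _ => gpd_nonneg η x) hstep hend
          hanti (fun x _ => hnn x) hclose
        have hsup : (⨆ x : Ici (0:ℝ),
            |1 - excessCdf (F ω) t (σF t * (x:ℝ)) - gpdSurv η (x:ℝ)|) ≤ 2*(ε/3) :=
          Real.iSup_le (fun x => hbd (x:ℝ) (mem_Ici.mp x.2)) (by positivity)
        linarith [hω.2]
      · left; exact hQ
    refine squeeze_zero
      (g := fun t => ∑ i ∈ Finset.range (n+1),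
        (μ (A i t)).toReal / (μ {ω | t < Y ω}).toReal)
      (fun t => by positivity) (fun t => ?_) ?_
    · have h1 : μ {ω | t < Y ω ∧ ε < ⨆ x : Ici (0:ℝ),
          |1 - excessCdf (F ω) t (σF t * (x:ℝ)) - gpdSurv η (x:ℝ)|} ≤
          ∑ i ∈ Finset.range (n+1), μ (A i t) := by
        calc μ {ω | t < Y ω ∧ ε < ⨆ x : Ici (0:ℝ),
              |1 - excessCdf (F ω) t (σF t * (x:ℝ)) - gpdSurv η (x:ℝ)|}
            ≤ μ ({ω | ¬ Q ω} ∪ ⋃ i ∈ Finset.range (n+1), A i t) := measure_mono (hsub t)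
          _ ≤ μ {ω | ¬ Q ω} + μ (⋃ i ∈ Finset.range (n+1), A i t) := measure_union_le _ _
          _ = μ (⋃ i ∈ Finset.range (n+1), A i t) := by rw [hN, zero_add]
          _ ≤ ∑ i ∈ Finset.range (n+1), μ (A i t) := measure_biUnion_finset_le _ _
      have h2 : (μ {ω | t < Y ω ∧ ε < ⨆ x : Ici (0:ℝ),
          |1 - excessCdf (F ω) t (σF t * (x:ℝ)) - gpdSurv η (x:ℝ)|}).toReal ≤
          ∑ i ∈ Finset.range (n+1), (μ (A i t)).toReal := by
        rw [← ENNReal.toReal_sum (fun i _ => measure_ne_top μ _)]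
        exact ENNReal.toReal_mono
          (ENNReal.sum_lt_top.mpr (fun i _ => measure_lt_top μ _)).ne h1
      calc (μ {ω | t < Y ω ∧ ε < ⨆ x : Ici (0:ℝ),
            |1 - excessCdf (F ω) t (σF t * (x:ℝ)) - gpdSurv η (x:ℝ)|}).toReal /
            (μ {ω | t < Y ω}).toReal
          ≤ (∑ i ∈ Finset.range (n+1), (μ (A i t)).toReal) / (μ {ω | t < Y ω}).toReal :=
            myDiv_le h2 ENNReal.toReal_nonneg
        _ = ∑ i ∈ Finset.range (n+1),
            (μ (A i t)).toReal / (μ {ω | t < Y ω}).toReal := Finset.sum_div _ _ _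
    · have h := tendsto_finset_sum (Finset.range (n+1))
        (fun i (_ : i ∈ Finset.range (n+1)) => hpt (p i) (hpnn i) (ε/3) (by positivity))
      simpa using h
end
end

section
/- Misinformed forecaster: fix γ > 0 and let Δ₁, Δ₂ be independent gamma random variables with shape 1/γ and rate 1/γ (so E[e^{−sΔⱼ}] = (1 + γs)^{−1/γ} for s ≥ 0). Conditionally on (Δ₁, Δ₂), let Y be exponential with rate Δ₁, i.e. P(Y ≤ x | Δ₁, Δ₂) = 1 − e^{−Δ₁x} for x ≥ 0, and let the forecast be F(x) = 1 − e^{−Δ₂x} for x ≥ 0. Then: (i) for all t ≥ 0, P(Y ≤ t) = E[F(t)] = 1 − (1 + γt)^{−1/γ}, so F is marginally calibrated; (ii) for every u ∈ (0,1), P(Z_F^{(t)} ≤ u, Y > t)/P(Y > t) → 0 as t → ∞, so the severity condition fails and F is not probabilistically tail calibrated. -/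
/-
Conditionally on the rates `Δ₁, Δ₂`, both the outcome and the forecast are exponential, so the
unconditional survival functions of `Y` and of `F` are the Laplace transform of the gamma law,
`(1 + γ t)^(-1/γ)`: the forecaster is marginally calibrated.

Given `Y > t`, the excess PIT is `1 - exp (-Δ₂ (Y - t))`, which is at most `u < 1` only if
`Δ₂ ≤ δ` or `Y - t ≤ a := -log (1 - u) / δ`. The first event has probability
`P(Δ₂ ≤ δ) P(Y > t)` since `Δ₂` is independent of the tail of `Y`, and the second has relative
probability `1 - P(Y > t + a) / P(Y > t) → 0` because the Pareto-type tail of `Y` is long. Letting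
`t → ∞` and then `δ → 0`, the severity ratio tends to `0` rather than `u`.
-/

open MeasureTheory ProbabilityTheory Filter Set Topology

noncomputable section

open Real

section Gamma

lemma gammaMeasure_Iic_zero (a r : ℝ) : gammaMeasure a r (Iic 0) = 0 := by
  rw [gammaMeasure, withDensity_apply _ measurableSet_Iic, ← setLIntegral_congr Iio_ae_eq_Iic,
    lintegral_gammaPDF_of_nonpos le_rfl]

lemma integral_exp_neg_mul_gammaMeasure {a r s : ℝ} (ha : 0 < a) (hr : 0 < r) (hs : 0 ≤ s) :
    ∫ x, exp (-x * s) ∂gammaMeasure a r = (r / (r + s)) ^ a := by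
  have hrs : 0 < r + s := by linarith
  have hdensity : ∀ x ∈ Ioi (0 : ℝ), (gammaPDF a r x).toReal • exp (-x * s) =
      r ^ a / Gamma a * (x ^ (a - 1) * exp (-((r + s) * x))) := fun x hx => by
    rw [gammaPDF, ENNReal.toReal_ofReal (gammaPDFReal_nonneg ha hr x), gammaPDFReal,
      if_pos (le_of_lt hx), smul_eq_mul, mul_assoc, mul_assoc, ← exp_add]
    ring_nf
  rw [gammaMeasure, _root_.integral_withDensity_eq_integral_toReal_smul
      (f := gammaPDF a r) (measurable_gammaPDFReal a r).ennreal_ofReal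
      (ae_of_all _ fun _ => ENNReal.ofReal_lt_top),
    ← setIntegral_eq_integral_of_forall_compl_eq_zero (s := Ici 0) fun x hx => by
      simp [gammaPDF_of_neg (not_le.mp hx)], integral_Ici_eq_integral_Ioi,
    setIntegral_congr_fun measurableSet_Ioi hdensity, integral_const_mul,
    integral_rpow_mul_exp_neg_mul_Ioi ha hrs, div_rpow hr.le hrs.le, one_div, inv_rpow hrs.le]
  field_simp [(Gamma_pos_of_pos ha).ne']

lemma one_div_div_one_div_add_rpow {γ s : ℝ} (hγ : 0 < γ) (hs : 0 ≤ s) :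
    ((1 / γ) / (1 / γ + s)) ^ (1 / γ) = (1 + γ * s) ^ (-(1 / γ)) := by
  have hpos : 0 < 1 + γ * s := by positivity
  rw [show (1 / γ) / (1 / γ + s) = (1 + γ * s)⁻¹ by field_simp, inv_rpow hpos.le,
    rpow_neg hpos.le]

variable {Ω : Type*} {m0 : MeasurableSpace Ω} {μ : Measure Ω} {Δ : Ω → ℝ} {a r : ℝ}

lemma measure_le_zero_of_map_eq_gammaMeasure (hΔ : AEMeasurable Δ μ)
    (hlaw : μ.map Δ = gammaMeasure a r) : μ {ω | Δ ω ≤ 0} = 0 := by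
  rw [← gammaMeasure_Iic_zero a r, ← hlaw, Measure.map_apply_of_aemeasurable hΔ measurableSet_Iic]
  rfl

lemma ae_pos_of_map_eq_gammaMeasure (hΔ : AEMeasurable Δ μ) (hlaw : μ.map Δ = gammaMeasure a r) :
    ∀ᵐ ω ∂μ, 0 < Δ ω := by
  simpa only [ae_iff, not_lt] using measure_le_zero_of_map_eq_gammaMeasure hΔ hlaw

lemma integral_exp_neg_mul_of_map_eq_gammaMeasure (hΔ : AEMeasurable Δ μ) (ha : 0 < a)
    (hr : 0 < r) (hlaw : μ.map Δ = gammaMeasure a r) {s : ℝ} (hs : 0 ≤ s) :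
    ∫ ω, exp (-Δ ω * s) ∂μ = (r / (r + s)) ^ a := by
  rw [← integral_exp_neg_mul_gammaMeasure ha hr hs, ← hlaw, integral_map hΔ (by fun_prop)]

lemma integral_exp_neg_mul_of_map_eq_gammaMeasure_one_div {γ : ℝ} (hγ : 0 < γ)
    (hΔ : AEMeasurable Δ μ) (hlaw : μ.map Δ = gammaMeasure (1 / γ) (1 / γ)) {s : ℝ}
    (hs : 0 ≤ s) : ∫ ω, exp (-Δ ω * s) ∂μ = (1 + γ * s) ^ (-(1 / γ)) := by
  rw [integral_exp_neg_mul_of_map_eq_gammaMeasure hΔ (by positivity) (by positivity) hlaw hs,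
    one_div_div_one_div_add_rpow hγ hs]

lemma tendsto_measureReal_le_nhdsGT [IsProbabilityMeasure μ] {X : Ω → ℝ} (hX : Measurable X)
    (x : ℝ) :
    Tendsto (fun δ => μ.real {ω | X ω ≤ δ}) (𝓝[>] x) (𝓝 (μ.real {ω | X ω ≤ x})) := by
  have := Measure.isProbabilityMeasure_map (μ := μ) hX.aemeasurable
  have hcdf : ∀ y, μ.real {ω | X ω ≤ y} = cdf (μ.map X) y := fun y => by
    rw [cdf_eq_real, map_measureReal_apply hX measurableSet_Iic]
    rfl
  simp only [hcdf]
  exact ((cdf (μ.map X)).right_continuous x).mono Ioi_subset_Ici_self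

lemma tendsto_measureReal_le_nhdsGT_zero_of_map_eq_gammaMeasure [IsProbabilityMeasure μ]
    (hΔ : Measurable Δ) (hlaw : μ.map Δ = gammaMeasure a r) :
    Tendsto (fun δ => μ.real {ω | Δ ω ≤ δ}) (𝓝[>] 0) (𝓝 0) := by
  simpa [measureReal_def, measure_le_zero_of_map_eq_gammaMeasure hΔ.aemeasurable hlaw]
    using tendsto_measureReal_le_nhdsGT (μ := μ) hΔ 0

end Gamma

section CondProb

variable {Ω : Type*} {m m0 : MeasurableSpace Ω} {μ : Measure Ω} [IsFiniteMeasure μ] {A : Set Ω}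

lemma condProb_compl_ae_eq (hm : m ≤ m0) (hA : MeasurableSet A) :
    condProb μ m Aᶜ =ᵐ[μ] fun ω => 1 - condProb μ m A ω := by
  rw [condProb, indicator_compl]
  filter_upwards [condExp_sub (μ := μ) (integrable_const (1 : ℝ))
    ((integrable_const 1).indicator hA) m] with ω hω
  rw [hω, Pi.sub_apply, condExp_const hm]
  rfl

lemma measureReal_inter_eq_setIntegral_of_condProb_ae_eq (hm : m ≤ m0) (hA : MeasurableSet A)
    {B : Set Ω} (hB : MeasurableSet[m] B) {f : Ω → ℝ} (hf : condProb μ m A =ᵐ[μ] f) :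
    μ.real (B ∩ A) = ∫ ω in B, f ω ∂μ := by
  calc μ.real (B ∩ A) = ∫ ω in B, A.indicator (fun _ => (1 : ℝ)) ω ∂μ := by
        rw [← Pi.one_def, integral_indicator_one hA, measureReal_restrict_apply hA, inter_comm]
    _ = ∫ ω in B, condProb μ m A ω ∂μ :=
        (setIntegral_condExp hm ((integrable_const (1 : ℝ)).indicator hA) hB).symm
    _ = ∫ ω in B, f ω ∂μ :=
        setIntegral_congr_ae₀ (hm B hB).nullMeasurableSet (hf.mono fun _ h _ => h)

def IsCondExponential (μ : Measure Ω) (m : MeasurableSpace Ω) (Y Λ : Ω → ℝ) : Prop :=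
  ∀ x : ℝ, 0 ≤ x → condProb μ m {ω | Y ω ≤ x} =ᵐ[μ] fun ω => 1 - exp (-Λ ω * x)

variable {Y Λ : Ω → ℝ} {t : ℝ}

lemma IsCondExponential.condProb_lt_ae_eq (h : IsCondExponential μ m Y Λ) (hm : m ≤ m0)
    (hY : Measurable Y) (ht : 0 ≤ t) :
    condProb μ m {ω | t < Y ω} =ᵐ[μ] fun ω => exp (-Λ ω * t) := by
  rw [show {ω | t < Y ω} = {ω | Y ω ≤ t}ᶜ by ext; simp]
  filter_upwards [condProb_compl_ae_eq (A := {ω | Y ω ≤ t}) hm (hY measurableSet_Iic), h t ht]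
    with ω h1 h2
  rw [h1, h2, sub_sub_cancel]

lemma IsCondExponential.measureReal_inter_lt (h : IsCondExponential μ m Y Λ) (hm : m ≤ m0)
    (hY : Measurable Y) {B : Set Ω} (hB : MeasurableSet[m] B) (ht : 0 ≤ t) :
    μ.real (B ∩ {ω | t < Y ω}) = ∫ ω in B, exp (-Λ ω * t) ∂μ :=
  measureReal_inter_eq_setIntegral_of_condProb_ae_eq hm (hY measurableSet_Ioi) hB
    (h.condProb_lt_ae_eq hm hY ht)

lemma IsCondExponential.measureReal_lt (h : IsCondExponential μ m Y Λ) (hm : m ≤ m0)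
    (hY : Measurable Y) (ht : 0 ≤ t) : μ.real {ω | t < Y ω} = ∫ ω, exp (-Λ ω * t) ∂μ := by
  simpa using h.measureReal_inter_lt hm hY .univ ht

end CondProb

section Mixture

variable {Ω : Type*} {m0 : MeasurableSpace Ω} {μ : Measure Ω} [IsFiniteMeasure μ]
  {Δ₁ Δ₂ Y : Ω → ℝ} {t : ℝ}

-- `P(t < Y | Δ₁, Δ₂) = exp (-Δ₁ t)` is a function of `Δ₁` alone, which is independent of `Δ₂`.
lemma measureReal_le_and_lt_eq_mul (hΔ₁ : Measurable Δ₁) (hΔ₂ : Measurable Δ₂) (hY : Measurable Y)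
    (hindep : IndepFun Δ₁ Δ₂ μ)
    (hcond : IsCondExponential μ (MeasurableSpace.comap (fun ω => (Δ₁ ω, Δ₂ ω)) inferInstance)
      Y Δ₁) (ht : 0 ≤ t) (b : ℝ) :
    μ.real {ω | Δ₂ ω ≤ b ∧ t < Y ω} = μ.real {ω | Δ₂ ω ≤ b} * μ.real {ω | t < Y ω} := by
  have hm := (hΔ₁.prodMk hΔ₂).comap_le
  rw [show {ω | Δ₂ ω ≤ b ∧ t < Y ω} = {ω | Δ₂ ω ≤ b} ∩ {ω | t < Y ω} from rfl,
    hcond.measureReal_inter_lt (B := {ω | Δ₂ ω ≤ b}) hm hY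
      ((measurable_snd.comp (comap_measurable _)) measurableSet_Iic) ht,
    Indep.setIntegral_eq_mul (A := {ω | Δ₂ ω ≤ b}) (f := fun x => exp (-x * t)) hΔ₂.comap_le
      ((IndepFun_iff_Indep _ _ _).1 hindep.symm) hΔ₁.aemeasurable
      ((comap_measurable Δ₂) measurableSet_Iic) (by fun_prop),
    hcond.measureReal_lt hm hY ht]

end Mixture

def expCdf (r x : ℝ) : ℝ :=
  if 0 ≤ x then 1 - exp (-r * x) else 0

lemma one_sub_expCdf {r x : ℝ} (hx : 0 ≤ x) : 1 - expCdf r x = exp (-r * x) := by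
  rw [expCdf, if_pos hx, sub_sub_cancel]

lemma integral_expCdf {Ω : Type*} {m0 : MeasurableSpace Ω} {μ : Measure Ω}
    [IsProbabilityMeasure μ] {Δ : Ω → ℝ} (hΔ : AEMeasurable Δ μ) (hΔ_pos : ∀ᵐ ω ∂μ, 0 < Δ ω)
    {x : ℝ} (hx : 0 ≤ x) : ∫ ω, expCdf (Δ ω) x ∂μ = 1 - ∫ ω, exp (-Δ ω * x) ∂μ := by
  have hint : Integrable (fun ω => exp (-Δ ω * x)) μ := by
    refine (integrable_const 1).mono' (by fun_prop) ?_
    filter_upwards [hΔ_pos] with ω hω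
    rw [norm_of_nonneg (exp_pos _).le, exp_le_one_iff]
    nlinarith
  simp only [expCdf, if_pos hx]
  rw [integral_sub (integrable_const 1) hint]
  simp

lemma excessCdf_expCdf {r t x : ℝ} (ht : 0 ≤ t) (hx : 0 ≤ x) :
    excessCdf (expCdf r) t x = 1 - exp (-r * x) := by
  have hlt : expCdf r t < 1 := by linarith [one_sub_expCdf (r := r) ht, exp_pos (-r * t)]
  rw [excessCdf, if_pos hlt]
  simp only [expCdf, if_pos ht, if_pos (add_nonneg hx ht), sub_sub_cancel,
    show -r * (x + t) = -r * x + -r * t by ring, exp_add]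
  field_simp
  ring

lemma mul_sub_le_of_excessCdf_expCdf_le {r t y u : ℝ} (ht : 0 ≤ t) (hty : t ≤ y) (hu : u < 1)
    (h : excessCdf (expCdf r) t (y - t) ≤ u) : r * (y - t) ≤ -log (1 - u) := by
  rw [excessCdf_expCdf ht (sub_nonneg.mpr hty)] at h
  have := (log_le_iff_le_exp (sub_pos.mpr hu)).mpr (by linarith)
  linarith

lemma tendsto_one_add_mul_rpow_div_atTop {γ : ℝ} (hγ : 0 < γ) (p a : ℝ) :
    Tendsto (fun t => (1 + γ * (t + a)) ^ p / (1 + γ * t) ^ p) atTop (𝓝 1) := by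
  have hden : Tendsto (fun t => 1 + γ * t) atTop atTop :=
    tendsto_atTop_add_const_left _ 1 (tendsto_id.const_mul_atTop hγ)
  have hbase : Tendsto (fun t => 1 + γ * a / (1 + γ * t)) atTop (𝓝 1) := by
    simpa using tendsto_const_nhds.add (tendsto_const_nhds.div_atTop hden)
  have hrpow := ((continuousAt_rpow_const 1 p (Or.inl one_ne_zero)).tendsto.comp hbase)
  rw [one_rpow] at hrpow
  refine hrpow.congr' ?_
  filter_upwards [hden.eventually_gt_atTop 0, eventually_ge_atTop (-a)] with t ht hta
  have hta' : 0 ≤ 1 + γ * (t + a) := by nlinarith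
  rw [Function.comp_apply, ← div_rpow hta' ht.le]
  congr 1
  field_simp
  ring

lemma tendsto_measureReal_lt_add_div_of_eq_rpow {Ω : Type*} {m0 : MeasurableSpace Ω}
    {μ : Measure Ω} {Y : Ω → ℝ} {γ p : ℝ} (hγ : 0 < γ)
    (hY : ∀ t, 0 ≤ t → μ.real {ω | t < Y ω} = (1 + γ * t) ^ p) (a : ℝ) :
    Tendsto (fun t => μ.real {ω | t + a < Y ω} / μ.real {ω | t < Y ω}) atTop (𝓝 1) := by
  refine (tendsto_one_add_mul_rpow_div_atTop hγ p a).congr' ?_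
  filter_upwards [eventually_ge_atTop 0, eventually_ge_atTop (-a)] with t ht hta
  rw [hY t ht, hY (t + a) (by linarith)]

section Tail

variable {Ω : Type*} {m0 : MeasurableSpace Ω} {μ : Measure Ω} {Y R : Ω → ℝ}

lemma setOf_excessPIT_expCdf_le_subset {δ t u : ℝ} (hδ : 0 < δ) (hu1 : u < 1) (ht : 0 ≤ t) :
    {ω | excessPIT (fun ω => expCdf (R ω)) Y t ω ≤ u ∧ t < Y ω} ⊆
      {ω | t < Y ω ∧ Y ω ≤ t + -log (1 - u) / δ} ∪ {ω | R ω ≤ δ ∧ t < Y ω} := by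
  rintro ω ⟨hZ, htY⟩
  by_cases hRδ : R ω ≤ δ
  · exact Or.inr ⟨hRδ, htY⟩
  refine Or.inl ⟨htY, ?_⟩
  have hR := mul_sub_le_of_excessCdf_expCdf_le ht htY.le hu1 hZ
  have : δ * (Y ω - t) ≤ -log (1 - u) := by nlinarith
  rw [← sub_le_iff_le_add', le_div_iff₀ hδ]
  linarith

theorem tendsto_measureReal_excessPIT_expCdf_le_div [IsFiniteMeasure μ] (hY : Measurable Y)
    (hlong : ∀ a, Tendsto (fun t => μ.real {ω | t + a < Y ω} / μ.real {ω | t < Y ω}) atTop (𝓝 1))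
    (hpos : ∀ᶠ t in atTop, 0 < μ.real {ω | t < Y ω})
    (hindep : ∀ᶠ t in atTop, ∀ b,
      μ.real {ω | R ω ≤ b ∧ t < Y ω} = μ.real {ω | R ω ≤ b} * μ.real {ω | t < Y ω})
    (hR : Tendsto (fun δ => μ.real {ω | R ω ≤ δ}) (𝓝[>] 0) (𝓝 0)) {u : ℝ} (hu0 : 0 ≤ u)
    (hu1 : u < 1) :
    Tendsto (fun t => μ.real {ω | excessPIT (fun ω => expCdf (R ω)) Y t ω ≤ u ∧ t < Y ω} /
      μ.real {ω | t < Y ω}) atTop (𝓝 0) := by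
  refine tendsto_order.2 ⟨fun ε hε => Eventually.of_forall fun t => hε.trans_le (by positivity),
    fun ε hε => ?_⟩
  obtain ⟨δ, hRδ, hδ⟩ := ((hR.eventually (gt_mem_nhds (half_pos hε))).and
    self_mem_nhdsWithin).exists
  set a := -log (1 - u) / δ
  have ha : 0 ≤ a := div_nonneg (neg_nonneg.mpr (log_nonpos (by linarith) (by linarith))) hδ.le
  filter_upwards [(hlong a).eventually (lt_mem_nhds (show 1 - ε / 2 < 1 by linarith)), hpos,
    hindep, eventually_ge_atTop 0] with t hratio hSt hprod ht
  have hshift : {ω | t + a < Y ω} ⊆ {ω | t < Y ω} := fun ω (h : t + a < Y ω) =>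
    (le_add_of_nonneg_right ha).trans_lt h
  have hband : μ.real {ω | t < Y ω ∧ Y ω ≤ t + a} =
      μ.real {ω | t < Y ω} - μ.real {ω | t + a < Y ω} := by
    rw [← measureReal_sdiff hshift (hY measurableSet_Ioi)]
    congr 1
    ext ω
    simp
  have hnum := (measureReal_mono (setOf_excessPIT_expCdf_le_subset (R := R) (Y := Y) hδ hu1 ht)
    (measure_ne_top μ _)).trans (measureReal_union_le _ _)
  rw [hband, hprod] at hnum
  rw [lt_div_iff₀ hSt] at hratio
  rw [div_lt_iff₀ hSt]
  nlinarith

end Tail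

section Endpoint

variable {Ω : Type*} {m0 : MeasurableSpace Ω} {μ : Measure Ω} {Y : Ω → ℝ}

lemma upperEndpoint_eq_top [IsProbabilityMeasure μ] (hY : Measurable Y)
    (hpos : ∀ᶠ t in atTop, 0 < μ.real {ω | t < Y ω}) : upperEndpoint μ Y = ⊤ := by
  refine sSup_eq_top.mpr fun b hb => ?_
  obtain ⟨x, hbx, -⟩ := EReal.exists_between_coe_real hb
  refine ⟨x, ⟨x, (?_ : μ {ω | Y ω ≤ x} < 1), rfl⟩, hbx⟩
  obtain ⟨y, hy, hxy⟩ := (hpos.and (eventually_ge_atTop x)).exists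
  have hsub : {ω | y < Y ω} ⊆ {ω | x < Y ω} := fun ω h => hxy.trans_lt h
  rw [show {ω | Y ω ≤ x} = {ω | x < Y ω}ᶜ by ext; simp,
    prob_compl_eq_one_sub (s := {ω | x < Y ω}) (hY measurableSet_Ioi)]
  exact ENNReal.sub_lt_self ENNReal.one_ne_top one_ne_zero
    fun h0 => hy.ne' ((measureReal_eq_zero_iff).mpr (measure_mono_null hsub h0))

lemma atTop_le_toEndpoint_top : atTop ≤ toEndpoint ⊤ := by
  refine tendsto_iff_comap.mp (tendsto_nhdsWithin_iff.mpr ⟨?_, .of_forall EReal.coe_lt_top⟩)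
  exact EReal.tendsto_nhds_top_iff_real.mpr fun x =>
    (eventually_gt_atTop x).mono fun _ h => EReal.coe_lt_coe_iff.mpr h

lemma not_probTailCalibrated_of_tendsto_zero [IsProbabilityMeasure μ] {F : Ω → ℝ → ℝ}
    (hY : Measurable Y) (hpos : ∀ᶠ t in atTop, 0 < μ.real {ω | t < Y ω})
    (hden : ∀ᶠ t in atTop, ∫ ω, (1 - F ω t) ∂μ = μ.real {ω | t < Y ω}) {u : ℝ}
    (hu : u ∈ Ioc 0 1)
    (hzero : Tendsto (fun t => μ.real {ω | excessPIT F Y t ω ≤ u ∧ t < Y ω} /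
      μ.real {ω | t < Y ω}) atTop (𝓝 0)) :
    ¬ ProbTailCalibrated μ F Y := by
  intro hcal
  have hu' : Tendsto (fun t => μ.real {ω | excessPIT F Y t ω ≤ u ∧ t < Y ω} /
      ∫ ω, (1 - F ω t) ∂μ) atTop (𝓝 u) := by
    refine (hcal.2 u (Ioc_subset_Icc_self hu)).mono_left ?_
    rw [upperEndpoint_eq_top hY hpos]
    exact atTop_le_toEndpoint_top
  have := tendsto_nhds_unique (hu'.congr' (hden.mono fun t ht => by rw [ht])) hzero
  exact hu.1.ne' this

end Endpoint

theorem misinformed_forecaster_general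
    {Ω : Type*} {m0 : MeasurableSpace Ω} (μ : Measure Ω) [IsProbabilityMeasure μ]
    (γ : ℝ) (hγ : 0 < γ)
    (Δ₁ Δ₂ Y : Ω → ℝ) (hΔ₁ : Measurable Δ₁) (hΔ₂ : Measurable Δ₂) (hY : Measurable Y)
    (hlaw₁ : μ.map Δ₁ = gammaMeasure (1 / γ) (1 / γ))
    (hlaw₂ : μ.map Δ₂ = gammaMeasure (1 / γ) (1 / γ))
    (hindep : IndepFun Δ₁ Δ₂ μ)
    (hcond : ∀ x : ℝ, 0 ≤ x →
      condProb μ (MeasurableSpace.comap (fun ω => (Δ₁ ω, Δ₂ ω)) inferInstance)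
          {ω' | Y ω' ≤ x} =ᵐ[μ] fun ω => 1 - Real.exp (-(Δ₁ ω) * x))
    (F : Ω → ℝ → ℝ)
    (hFdef : ∀ ω x, F ω x = if 0 ≤ x then 1 - Real.exp (-(Δ₂ ω) * x) else 0) :
    (∀ t : ℝ, 0 ≤ t →
        (μ {ω | Y ω ≤ t}).toReal = ∫ ω, F ω t ∂μ ∧
        (μ {ω | Y ω ≤ t}).toReal = 1 - (1 + γ * t) ^ (-(1 / γ))) ∧
      (∀ u ∈ Ioo (0 : ℝ) 1,
        Tendsto (fun t : ℝ =>
            (μ {ω | excessPIT F Y t ω ≤ u ∧ t < Y ω}).toReal /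
              (μ {ω | t < Y ω}).toReal)
          atTop (𝓝 0)) ∧
      ¬ ProbTailCalibrated μ F Y := by
  obtain rfl : F = fun ω => expCdf (Δ₂ ω) := funext fun ω => funext (hFdef ω)
  have hm := (hΔ₁.prodMk hΔ₂).comap_le
  have htail : ∀ t, 0 ≤ t → μ.real {ω | t < Y ω} = (1 + γ * t) ^ (-(1 / γ)) := fun t ht => by
    rw [IsCondExponential.measureReal_lt hcond hm hY ht,
      integral_exp_neg_mul_of_map_eq_gammaMeasure_one_div hγ hΔ₁.aemeasurable hlaw₁ ht]
  have hpos : ∀ᶠ t in atTop, 0 < μ.real {ω | t < Y ω} :=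
    (eventually_ge_atTop 0).mono fun t ht => htail t ht ▸ by positivity
  have hsevere : ∀ u ∈ Ioo (0 : ℝ) 1, Tendsto (fun t =>
      μ.real {ω | excessPIT (fun ω => expCdf (Δ₂ ω)) Y t ω ≤ u ∧ t < Y ω} /
        μ.real {ω | t < Y ω}) atTop (𝓝 0) := fun u hu =>
    tendsto_measureReal_excessPIT_expCdf_le_div hY
      (tendsto_measureReal_lt_add_div_of_eq_rpow hγ htail) hpos
      ((eventually_ge_atTop 0).mono fun t ht =>
        measureReal_le_and_lt_eq_mul hΔ₁ hΔ₂ hY hindep hcond ht)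
      (tendsto_measureReal_le_nhdsGT_zero_of_map_eq_gammaMeasure hΔ₂ hlaw₂) hu.1.le hu.2
  have hlaplace₂ : ∀ t, 0 ≤ t → ∫ ω, exp (-Δ₂ ω * t) ∂μ = (1 + γ * t) ^ (-(1 / γ)) :=
    fun t ht => integral_exp_neg_mul_of_map_eq_gammaMeasure_one_div hγ hΔ₂.aemeasurable hlaw₂ ht
  have hden : ∀ᶠ t in atTop, ∫ ω, (1 - expCdf (Δ₂ ω) t) ∂μ = μ.real {ω | t < Y ω} :=
    (eventually_ge_atTop 0).mono fun t ht => by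
      simp only [one_sub_expCdf ht, hlaplace₂ t ht, htail t ht]
  refine ⟨fun t ht => ?_, hsevere, not_probTailCalibrated_of_tendsto_zero hY hpos hden
    ⟨one_half_pos, one_half_lt_one.le⟩ (hsevere _ ⟨one_half_pos, one_half_lt_one⟩)⟩
  have hcdf : μ.real {ω | Y ω ≤ t} = 1 - (1 + γ * t) ^ (-(1 / γ)) := by
    rw [show {ω | Y ω ≤ t} = {ω | t < Y ω}ᶜ by ext; simp,
      probReal_compl_eq_one_sub (s := {ω | t < Y ω}) (hY measurableSet_Ioi), htail t ht]
  refine ⟨?_, hcdf⟩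
  rw [← measureReal_def, hcdf, integral_expCdf hΔ₂.aemeasurable
    (ae_pos_of_map_eq_gammaMeasure hΔ₂.aemeasurable hlaw₂) ht, hlaplace₂ t ht]

/-- the misinformed forecaster is marginally calibrated but the severity
condition fails, so it is not probabilistically tail calibrated. -/
theorem misinformed_forecaster
    {Ω : Type*} {m0 : MeasurableSpace Ω} (μ : Measure Ω) [IsProbabilityMeasure μ]
    (γ : ℝ) (hγ : 0 < γ)
    (Δ₁ Δ₂ Y : Ω → ℝ) (hΔ₁ : Measurable Δ₁) (hΔ₂ : Measurable Δ₂) (hY : Measurable Y)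
    (hlaw₁ : μ.map Δ₁ = gammaMeasure (1 / γ) (1 / γ))
    (hlaw₂ : μ.map Δ₂ = gammaMeasure (1 / γ) (1 / γ))
    (hindep : IndepFun Δ₁ Δ₂ μ)
    (hcond : ∀ x : ℝ, 0 ≤ x →
      condProb μ (MeasurableSpace.comap (fun ω => (Δ₁ ω, Δ₂ ω)) inferInstance)
          {ω' | Y ω' ≤ x} =ᵐ[μ] fun ω => 1 - Real.exp (-(Δ₁ ω) * x))
    (hYnonneg : ∀ᵐ ω ∂μ, 0 ≤ Y ω)
    (F : Ω → ℝ → ℝ)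
    (hFdef : ∀ ω x, F ω x = if 0 ≤ x then 1 - Real.exp (-(Δ₂ ω) * x) else 0) :
    (∀ t : ℝ, 0 ≤ t →
        (μ {ω | Y ω ≤ t}).toReal = ∫ ω, F ω t ∂μ ∧
        (μ {ω | Y ω ≤ t}).toReal = 1 - (1 + γ * t) ^ (-(1 / γ))) ∧
      (∀ u ∈ Ioo (0 : ℝ) 1,
        Tendsto (fun t : ℝ =>
            (μ {ω | excessPIT F Y t ω ≤ u ∧ t < Y ω}).toReal /
              (μ {ω | t < Y ω}).toReal)
          atTop (𝓝 0)) ∧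
      ¬ ProbTailCalibrated μ F Y :=
  misinformed_forecaster_general (m0 := m0) μ γ hγ Δ₁ Δ₂ Y hΔ₁ hΔ₂ hY hlaw₁ hlaw₂ hindep hcond F
    hFdef
end
end

section
/- Tail unfocused forecaster: let ξ and τ be independent random variables with ξ exponential of rate 1 and P(τ = +1) = P(τ = −1) = 1/2; set a_τ = log((2 + τ)/2), Y = ξ, and let F be the conditional cdf of ξ + a_τ given τ, i.e. 1 − F(t) = ((2 + τ)/2) e^{−t} for t ≥ a_τ. Then: (i) for all t ≥ log(3/2) and u ∈ [0,1], P(Z_F^{(t)} ≤ u, Y > t)/E[1 − F(t)] = u, so F is probabilistically tail calibrated for Y; (ii) for all t ≥ log(3/2), P(Y > t | τ)/(1 − F(t)) = 2/(2 + τ), which does not converge almost surely to 1 as t → ∞, so F is not tail auto-calibrated for Y. -/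
/-!
Given `τ`, the forecast is the law of `log c + Exp(1)` with `c = (2 + τ) / 2`, whose excess over
any `t ≥ log c` is again `Exp(1)`. The outcome is `Exp(1)` as well, so beyond `log (3/2)` the
excess PIT is `1 - exp (t - Y)` whatever `τ` is, which is uniform on `{Y > t}`, and
`E[1 - F(t)] = E[c] e^{-t} = e^{-t} = P(Y > t)`. Since `Y` is independent of `τ`, however,
`P(Y > t | τ) = e^{-t}` while `1 - F(t) = c e^{-t}`, so the ratio is stuck at `1 / c ∈ {2, 2/3}`.
-/

open MeasureTheory ProbabilityTheory Filter Set Topology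

noncomputable section

open Real

/-- The cdf of `log c + Exp(1)`. -/
def expTailCdf (c x : ℝ) : ℝ :=
  if log c ≤ x then 1 - c * exp (-x) else 0

lemma one_sub_expTailCdf_of_log_le {c x : ℝ} (hx : log c ≤ x) :
    1 - expTailCdf c x = c * exp (-x) := by
  simp [expTailCdf, hx]

lemma one_sub_expTailCdf_pos {c : ℝ} (hc : 0 < c) (x : ℝ) : 0 < 1 - expTailCdf c x := by
  unfold expTailCdf
  split_ifs
  · simpa using mul_pos hc (exp_pos (-x))
  · norm_num

lemma excessCdf_expTailCdf {c t x : ℝ} (hc : 0 < c) (ht : log c ≤ t) (hx : 0 ≤ x) :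
    excessCdf (expTailCdf c) t x = 1 - exp (-x) := by
  have hsurv := one_sub_expTailCdf_of_log_le ht
  have hsurv' : 1 - expTailCdf c (x + t) = c * exp (-t) * exp (-x) := by
    rw [one_sub_expTailCdf_of_log_le (by linarith), neg_add, exp_add]
    ring
  have hpos : 0 < c * exp (-t) := by positivity
  rw [excessCdf, if_pos (by linarith)]
  calc (expTailCdf c (x + t) - expTailCdf c t) / (1 - expTailCdf c t)
      = ((1 - expTailCdf c t) - (1 - expTailCdf c (x + t))) / (1 - expTailCdf c t) := by ring
    _ = 1 - exp (-x) := by rw [hsurv, hsurv']; field_simp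

lemma toEndpoint_top : toEndpoint ⊤ = atTop := by
  have hIio : Iio (⊤ : EReal) = {⊤}ᶜ := by ext x; simp [lt_top_iff_ne_top]
  rw [toEndpoint, hIio, EReal.nhdsWithin_top, comap_map fun a b => by simp]

section ExponentialTail

variable {Ω : Type*} {m0 : MeasurableSpace Ω} {μ : Measure Ω} [IsProbabilityMeasure μ]
  {Y : Ω → ℝ}

lemma upperEndpoint_eq_top_of_exp_tail (hY : Measurable Y)
    (hYexp : ∀ t : ℝ, 0 ≤ t → μ {ω | t < Y ω} = ENNReal.ofReal (exp (-t))) :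
    upperEndpoint μ Y = ⊤ := by
  refine sSup_eq_top.2 fun b hb => ?_
  obtain ⟨x, hbx, -⟩ := EReal.exists_between_coe_real hb
  refine ⟨_, ⟨max x 0, ?_, rfl⟩, hbx.trans_le (EReal.coe_le_coe_iff.2 (le_max_left x 0))⟩
  have hcompl : {ω | Y ω ≤ max x 0} = {ω | max x 0 < Y ω}ᶜ := by
    ext ω; simp only [mem_ofPred_eq, mem_compl_iff, not_lt]
  rw [mem_ofPred_eq, hcompl, prob_compl_eq_one_sub (measurableSet_lt measurable_const hY),
    hYexp _ (le_max_right x 0)]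
  exact ENNReal.sub_lt_self ENNReal.one_ne_top one_ne_zero (by simp [exp_pos])

lemma measure_one_sub_exp_le_of_exp_tail (hY : Measurable Y)
    (hYexp : ∀ t : ℝ, 0 ≤ t → μ {ω | t < Y ω} = ENNReal.ofReal (exp (-t)))
    {t u : ℝ} (ht : 0 ≤ t) (hu : u ∈ Icc (0 : ℝ) 1) :
    μ {ω | 1 - exp (t - Y ω) ≤ u ∧ t < Y ω} = ENNReal.ofReal (u * exp (-t)) := by
  obtain ⟨hu0, hu1⟩ := hu
  rcases hu1.eq_or_lt with rfl | hu1
  · have hset : {ω | 1 - exp (t - Y ω) ≤ 1 ∧ t < Y ω} = {ω | t < Y ω} := by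
      ext ω; simp [(exp_pos _).le]
    rw [hset, hYexp t ht, one_mul]
  set s := t - log (1 - u) with hs
  have h1u : 0 < 1 - u := by linarith
  have hts : t ≤ s := by linarith [log_nonpos h1u.le (by linarith : 1 - u ≤ 1)]
  have hset : {ω | 1 - exp (t - Y ω) ≤ u ∧ t < Y ω} = {ω | t < Y ω} \ {ω | s < Y ω} := by
    ext ω
    have hiff : 1 - exp (t - Y ω) ≤ u ↔ Y ω ≤ s := by
      rw [sub_le_comm, ← log_le_iff_le_exp h1u]
      constructor <;> intro h <;> linarith
    simp only [mem_ofPred_eq, Set.mem_sdiff, not_lt, hiff, and_comm]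
  have hexps : exp (-s) = (1 - u) * exp (-t) := by
    rw [hs, neg_sub, sub_eq_add_neg, exp_add, exp_log h1u]
  have hsub : {ω | s < Y ω} ⊆ {ω | t < Y ω} := fun ω h => hts.trans_lt h
  rw [hset, measure_sdiff hsub
      (measurableSet_lt measurable_const hY).nullMeasurableSet (measure_ne_top μ _),
    hYexp t ht, hYexp s (ht.trans hts), ← ENNReal.ofReal_sub _ (exp_pos _).le, hexps]
  ring_nf

end ExponentialTail

section

variable {Ω : Type*} {m0 : MeasurableSpace Ω} {μ : Measure Ω}

lemma condProb_preimage_ae_eq_of_indepFun {β γ : Type*} [MeasurableSpace β] [MeasurableSpace γ]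
    [IsFiniteMeasure μ] {Y : Ω → β} {τ : Ω → γ} (hY : Measurable Y) (hτ : Measurable τ)
    (hindep : IndepFun Y τ μ) {B : Set β} (hB : MeasurableSet B) :
    condProb μ (MeasurableSpace.comap τ inferInstance) (Y ⁻¹' B) =ᵐ[μ]
      fun _ => μ.real (Y ⁻¹' B) := by
  have : SigmaFinite (μ.trim hτ.comap_le) := by
    have := isFiniteMeasure_trim (μ := μ) hτ.comap_le
    infer_instance
  have hind : StronglyMeasurable[MeasurableSpace.comap Y inferInstance]
      ((Y ⁻¹' B).indicator fun _ => (1 : ℝ)) :=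
    stronglyMeasurable_const.indicator ⟨B, hB, rfl⟩
  filter_upwards [condExp_indep_eq hY.comap_le hτ.comap_le hind hindep] with ω hω
  rw [condProb, hω, integral_indicator_const _ (hY hB), smul_eq_mul, mul_one]

lemma integral_comp_of_rademacher [IsProbabilityMeasure μ] {τ : Ω → ℝ} (hτ : Measurable τ)
    (hτval : ∀ ω, τ ω = 1 ∨ τ ω = -1) (hτhalf : μ {ω | τ ω = 1} = 1 / 2) (g : ℝ → ℝ) :
    ∫ ω, g (τ ω) ∂μ = (g 1 + g (-1)) / 2 := by
  have hmeas : MeasurableSet {ω | τ ω = 1} := hτ (measurableSet_singleton 1)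
  have hsplit : (fun ω => g (τ ω)) = fun ω =>
      {ω | τ ω = 1}.indicator (fun _ => g 1) ω + {ω | τ ω = 1}ᶜ.indicator (fun _ => g (-1)) ω := by
    ext ω
    rcases hτval ω with h | h <;> norm_num [h]
  have hhalf : μ.real {ω | τ ω = 1} = 1 / 2 := by simp [measureReal_def, hτhalf]
  rw [hsplit, integral_add ((integrable_const _).indicator hmeas)
      ((integrable_const _).indicator hmeas.compl),
    integral_indicator_const _ hmeas, integral_indicator_const _ hmeas.compl,
    probReal_compl_eq_one_sub hmeas, hhalf, smul_eq_mul, smul_eq_mul]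
  ring

lemma ae_eq_of_tendsto_of_forall_ge_ae_eq {f : ℝ → Ω → ℝ} {g : Ω → ℝ} {l t₀ : ℝ}
    (hfg : ∀ t, t₀ ≤ t → ∀ᵐ ω ∂μ, f t ω = g ω)
    (hlim : ∀ᵐ ω ∂μ, Tendsto (fun t => f t ω) atTop (𝓝 l)) :
    ∀ᵐ ω ∂μ, g ω = l := by
  have hseq : ∀ᵐ ω ∂μ, ∀ n : ℕ, f (t₀ + n) ω = g ω :=
    ae_all_iff.2 fun n => hfg _ (le_add_of_nonneg_right n.cast_nonneg)
  have hto : Tendsto (fun n : ℕ => t₀ + n) atTop atTop :=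
    tendsto_atTop_add_const_left _ _ tendsto_natCast_atTop_atTop
  filter_upwards [hseq, hlim] with ω hω hωlim
  exact tendsto_nhds_unique tendsto_const_nhds ((hωlim.comp hto).congr hω)

end

lemma half_two_add_pos {s : ℝ} (hs : s = 1 ∨ s = -1) : 0 < (2 + s) / 2 := by
  rcases hs with rfl | rfl <;> norm_num

lemma log_half_two_add_le {s : ℝ} (hs : s = 1 ∨ s = -1) : log ((2 + s) / 2) ≤ log (3 / 2) :=
  log_le_log (half_two_add_pos hs) (by rcases hs with rfl | rfl <;> norm_num)

section TailUnfocused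

variable {Ω : Type*} {m0 : MeasurableSpace Ω} {μ : Measure Ω} [IsProbabilityMeasure μ]
  {Y τ : Ω → ℝ}

lemma integral_one_sub_unfocused_pos (hτ : Measurable τ) (hτval : ∀ ω, τ ω = 1 ∨ τ ω = -1)
    (hτhalf : μ {ω | τ ω = 1} = 1 / 2) (t : ℝ) :
    0 < ∫ ω, (1 - expTailCdf ((2 + τ ω) / 2) t) ∂μ := by
  rw [integral_comp_of_rademacher hτ hτval hτhalf fun s => 1 - expTailCdf ((2 + s) / 2) t]
  have h₁ := one_sub_expTailCdf_pos (half_two_add_pos (.inl rfl : (1 : ℝ) = 1 ∨ _)) t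
  have h₂ := one_sub_expTailCdf_pos (half_two_add_pos (.inr rfl : (-1 : ℝ) = 1 ∨ _)) t
  positivity

lemma integral_one_sub_unfocused (hτ : Measurable τ) (hτval : ∀ ω, τ ω = 1 ∨ τ ω = -1)
    (hτhalf : μ {ω | τ ω = 1} = 1 / 2) {t : ℝ} (ht : log (3 / 2) ≤ t) :
    ∫ ω, (1 - expTailCdf ((2 + τ ω) / 2) t) ∂μ = exp (-t) :=
  calc ∫ ω, (1 - expTailCdf ((2 + τ ω) / 2) t) ∂μ = ∫ ω, (2 + τ ω) / 2 * exp (-t) ∂μ :=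
        integral_congr_ae <| ae_of_all _ fun ω =>
          one_sub_expTailCdf_of_log_le ((log_half_two_add_le (hτval ω)).trans ht)
    _ = exp (-t) := by
        rw [integral_comp_of_rademacher hτ hτval hτhalf fun s => (2 + s) / 2 * exp (-t)]
        ring

lemma unfocused_excessPIT_ratio (hY : Measurable Y) (hτ : Measurable τ)
    (hτval : ∀ ω, τ ω = 1 ∨ τ ω = -1) (hτhalf : μ {ω | τ ω = 1} = 1 / 2)
    (hYexp : ∀ t : ℝ, 0 ≤ t → μ {ω | t < Y ω} = ENNReal.ofReal (exp (-t)))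
    {t : ℝ} (ht : log (3 / 2) ≤ t) {u : ℝ} (hu : u ∈ Icc (0 : ℝ) 1) :
    (μ {ω | excessPIT (fun ω => expTailCdf ((2 + τ ω) / 2)) Y t ω ≤ u ∧ t < Y ω}).toReal /
      ∫ ω, (1 - expTailCdf ((2 + τ ω) / 2) t) ∂μ = u := by
  have ht₀ : 0 ≤ t := (log_pos (by norm_num)).le.trans ht
  have hset : {ω | excessPIT (fun ω => expTailCdf ((2 + τ ω) / 2)) Y t ω ≤ u ∧ t < Y ω} =
      {ω | 1 - exp (t - Y ω) ≤ u ∧ t < Y ω} := by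
    ext ω
    refine and_congr_left fun hω => ?_
    rw [excessPIT, excessCdf_expTailCdf (half_two_add_pos (hτval ω))
      ((log_half_two_add_le (hτval ω)).trans ht) (sub_nonneg.2 hω.le), neg_sub]
  rw [hset, measure_one_sub_exp_le_of_exp_tail hY hYexp ht₀ hu,
    integral_one_sub_unfocused hτ hτval hτhalf ht,
    ENNReal.toReal_ofReal (mul_nonneg hu.1 (exp_pos _).le),
    mul_div_cancel_right₀ _ (exp_ne_zero _)]

lemma unfocused_condProb_ratio (hY : Measurable Y) (hτ : Measurable τ)
    (hτval : ∀ ω, τ ω = 1 ∨ τ ω = -1) (hindep : IndepFun Y τ μ)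
    (hYexp : ∀ t : ℝ, 0 ≤ t → μ {ω | t < Y ω} = ENNReal.ofReal (exp (-t)))
    {t : ℝ} (ht : log (3 / 2) ≤ t) :
    ∀ᵐ ω ∂μ, condProb μ (MeasurableSpace.comap τ inferInstance) {ω' | t < Y ω'} ω /
      (1 - expTailCdf ((2 + τ ω) / 2) t) = 2 / (2 + τ ω) := by
  have htail : μ.real (Y ⁻¹' Ioi t) = exp (-t) := by
    rw [measureReal_def, show Y ⁻¹' Ioi t = {ω | t < Y ω} from rfl,
      hYexp t ((log_pos (by norm_num)).le.trans ht), ENNReal.toReal_ofReal (exp_pos _).le]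
  filter_upwards [condProb_preimage_ae_eq_of_indepFun hY hτ hindep (measurableSet_Ioi (a := t))]
    with ω hω
  have hpos := half_two_add_pos (hτval ω)
  rw [show {ω' | t < Y ω'} = Y ⁻¹' Ioi t from rfl, hω, htail,
    one_sub_expTailCdf_of_log_le ((log_half_two_add_le (hτval ω)).trans ht)]
  field_simp

end TailUnfocused

theorem tail_unfocused_forecaster_general
    {Ω : Type*} {m0 : MeasurableSpace Ω} (μ : Measure Ω) [IsProbabilityMeasure μ]
    (Y τ : Ω → ℝ) (hY : Measurable Y) (hτ : Measurable τ)
    (hτval : ∀ ω, τ ω = 1 ∨ τ ω = -1)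
    (hτhalf : μ {ω | τ ω = 1} = 1 / 2)
    (hindep : IndepFun Y τ μ)
    (hYexp : ∀ t : ℝ, 0 ≤ t → μ {ω | t < Y ω} = ENNReal.ofReal (Real.exp (-t)))
    (F : Ω → ℝ → ℝ)
    (hFdef : ∀ ω x, F ω x =
      if Real.log ((2 + τ ω) / 2) ≤ x then 1 - ((2 + τ ω) / 2) * Real.exp (-x) else 0) :
    (∀ t : ℝ, Real.log (3 / 2) ≤ t → ∀ u ∈ Icc (0 : ℝ) 1,
        (μ {ω | excessPIT F Y t ω ≤ u ∧ t < Y ω}).toReal /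
          (∫ ω, (1 - F ω t) ∂μ) = u) ∧
      ProbTailCalibrated μ F Y ∧
      (∀ t : ℝ, Real.log (3 / 2) ≤ t →
        ∀ᵐ ω ∂μ,
          condProb μ (MeasurableSpace.comap τ inferInstance) {ω' | t < Y ω'} ω /
            (1 - F ω t) = 2 / (2 + τ ω)) ∧
      ¬ (∀ᵐ ω ∂μ,
        Tendsto (fun t : ℝ =>
            condProb μ (MeasurableSpace.comap τ inferInstance) {ω' | t < Y ω'} ω /
              (1 - F ω t))
          atTop (𝓝 1)) := by
  obtain rfl : F = fun ω => expTailCdf ((2 + τ ω) / 2) := funext fun ω => funext (hFdef ω)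
  have hratio := fun (t : ℝ) ht (u : ℝ) hu =>
    unfocused_excessPIT_ratio hY hτ hτval hτhalf hYexp (t := t) ht (u := u) hu
  have hcond := fun (t : ℝ) ht =>
    unfocused_condProb_ratio (μ := μ) hY hτ hτval hindep hYexp (t := t) ht
  refine ⟨hratio, ⟨fun t _ => integral_one_sub_unfocused_pos hτ hτval hτhalf t, fun u hu => ?_⟩,
    hcond, fun hcal => ?_⟩
  · rw [upperEndpoint_eq_top_of_exp_tail hY hYexp, toEndpoint_top]
    exact tendsto_const_nhds.congr'
      ((eventually_ge_atTop _).mono fun t ht => (hratio t ht u hu).symm)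
  · obtain ⟨ω, hω⟩ := (ae_eq_of_tendsto_of_forall_ge_ae_eq hcond hcal).exists
    rcases hτval ω with h | h <;> norm_num [h] at hω

/-- the tail unfocused forecaster is probabilistically tail calibrated but not
tail auto-calibrated. -/
theorem tail_unfocused_forecaster
    {Ω : Type*} {m0 : MeasurableSpace Ω} (μ : Measure Ω) [IsProbabilityMeasure μ]
    (Y τ : Ω → ℝ) (hY : Measurable Y) (hτ : Measurable τ)
    (hτval : ∀ ω, τ ω = 1 ∨ τ ω = -1)
    (hτhalf : μ {ω | τ ω = 1} = 1 / 2)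
    (hindep : IndepFun Y τ μ)
    (hYexp : ∀ t : ℝ, 0 ≤ t → μ {ω | t < Y ω} = ENNReal.ofReal (Real.exp (-t)))
    (hYnonneg : μ {ω | Y ω < 0} = 0)
    (F : Ω → ℝ → ℝ)
    (hFdef : ∀ ω x, F ω x =
      if Real.log ((2 + τ ω) / 2) ≤ x then 1 - ((2 + τ ω) / 2) * Real.exp (-x) else 0) :
    (∀ t : ℝ, Real.log (3 / 2) ≤ t → ∀ u ∈ Icc (0 : ℝ) 1,
        (μ {ω | excessPIT F Y t ω ≤ u ∧ t < Y ω}).toReal /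
          (∫ ω, (1 - F ω t) ∂μ) = u) ∧
      ProbTailCalibrated μ F Y ∧
      (∀ t : ℝ, Real.log (3 / 2) ≤ t →
        ∀ᵐ ω ∂μ,
          condProb μ (MeasurableSpace.comap τ inferInstance) {ω' | t < Y ω'} ω /
            (1 - F ω t) = 2 / (2 + τ ω)) ∧
      ¬ (∀ᵐ ω ∂μ,
        Tendsto (fun t : ℝ =>
            condProb μ (MeasurableSpace.comap τ inferInstance) {ω' | t < Y ω'} ω /
              (1 - F ω t))
          atTop (𝓝 1)) :=
  tail_unfocused_forecaster_general (m0 := m0) μ Y τ hY hτ hτval hτhalf hindep hYexp F hFdef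
end
end

section
/- Generalized unfocused forecaster is probabilistically calibrated: let G be a cumulative distribution function supported on an interval [a, b] (possibly unbounded) with continuous density g > 0 on (a, b). Let Y ∼ G, let τ be independent of Y with P(τ = +1) = P(τ = −1) = 1/2, and given τ define the forecast F(y) = (G(y) + G(y + τ))/2 for y ∈ ℝ. Then the probability integral transform Z_F = F(Y) is uniformly distributed on [0, 1]. -/
/-!
Put `X = Y + (τ - 1) / 2`, i.e. `X = Y` when `τ = 1` and `X = Y - 1` when `τ = -1`. By the
independence of `Y` and `τ`, `X` has the continuous cdf `H x = (G x + G (x + 1)) / 2`, and on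
both values of `τ` the forecast gives `F (Y) = H (X)`. So `Z_F` is the probability integral
transform of a random variable with continuous cdf, which is uniform: the sublevel set
`{H ≤ u}` is a closed half-line `Iic c` with `H c = u`.
-/

open MeasureTheory ProbabilityTheory Filter Set Topology

noncomputable section

theorem Monotone.sublevel_eq_Iic_csSup {α β : Type*} [ConditionallyCompleteLinearOrder α]
    [TopologicalSpace α] [OrderTopology α] [DenselyOrdered α] [NoMaxOrder α]
    [LinearOrder β] [TopologicalSpace β] [OrderClosedTopology β]
    {h : α → β} (hmono : Monotone h) (hcont : Continuous h) {u : β}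
    (hne : {x | h x ≤ u}.Nonempty) (hbdd : BddAbove {x | h x ≤ u}) :
    {x | h x ≤ u} = Iic (sSup {x | h x ≤ u}) ∧ h (sSup {x | h x ≤ u}) = u := by
  set S := {x | h x ≤ u}
  have hmem : sSup S ∈ S := (isClosed_le hcont continuous_const).csSup_mem hne hbdd
  refine ⟨Subset.antisymm (fun x hx => le_csSup hbdd hx) (fun x hx => (hmono hx).trans hmem),
    le_antisymm hmem ?_⟩
  have hright : ∀ᶠ x in 𝓝[>] sSup S, u ≤ h x :=
    eventually_nhdsWithin_of_forall fun x hx =>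
      (not_le.mp fun hxu => (le_csSup hbdd hxu).not_gt hx).le
  exact _root_.ge_of_tendsto hcont.continuousWithinAt.tendsto hright

theorem measureReal_cdf_le {ν : Measure ℝ} [IsProbabilityMeasure ν]
    (hcont : Continuous (cdf ν)) {u : ℝ} (hu : u ∈ Icc (0 : ℝ) 1) :
    ν.real {x | cdf ν x ≤ u} = u := by
  by_cases hne : {x | cdf ν x ≤ u}.Nonempty
  swap
  · have hu0 : u = 0 := by
      refine le_antisymm (not_lt.mp fun hpos => hne ?_) hu.1
      exact ((tendsto_cdf_atBot ν).eventually_le_const hpos).exists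
    rw [not_nonempty_iff_eq_empty.mp hne, measureReal_empty, hu0]
  by_cases hbdd : BddAbove {x | cdf ν x ≤ u}
  swap
  · have hu1 : u = 1 := by
      refine le_antisymm hu.2 (not_lt.mp fun hlt => hbdd ?_)
      obtain ⟨M, hM⟩ := ((tendsto_cdf_atTop ν).eventually_const_lt hlt).exists_forall_of_atTop
      exact ⟨M, fun x hx => not_lt.mp fun hMx => (hM x hMx.le).not_ge hx⟩
    have huniv : {x | cdf ν x ≤ u} = univ := eq_univ_of_forall fun x => hu1 ▸ cdf_le_one ν x
    rw [huniv, probReal_univ, hu1]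
  obtain ⟨hIic, hc⟩ := (monotone_cdf ν).sublevel_eq_Iic_csSup hcont hne hbdd
  rw [hIic, ← cdf_eq_real, hc]

theorem measureReal_cdf_map_le {Ω : Type*} {m0 : MeasurableSpace Ω} {μ : Measure Ω}
    [IsProbabilityMeasure μ] {X : Ω → ℝ} (hX : Measurable X)
    (hcont : Continuous (cdf (μ.map X))) {u : ℝ} (hu : u ∈ Icc (0 : ℝ) 1) :
    μ.real {ω | cdf (μ.map X) (X ω) ≤ u} = u := by
  have := Measure.isProbabilityMeasure_map (μ := μ) hX.aemeasurable
  exact (map_measureReal_apply hX (isClosed_le hcont continuous_const).measurableSet).symm.trans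
    (measureReal_cdf_le hcont hu)

theorem ProbabilityTheory.IndepFun.measureReal_inter_preimage_eq_mul {Ω β γ : Type*}
    {m0 : MeasurableSpace Ω} {μ : Measure Ω} [MeasurableSpace β] [MeasurableSpace γ]
    {f : Ω → β} {g : Ω → γ} (hfg : IndepFun f g μ) {s : Set β} {t : Set γ}
    (hs : MeasurableSet s) (ht : MeasurableSet t) :
    μ.real (f ⁻¹' s ∩ g ⁻¹' t) = μ.real (f ⁻¹' s) * μ.real (g ⁻¹' t) := by
  rw [measureReal_def, hfg.measure_inter_preimage_eq_mul _ _ hs ht, ENNReal.toReal_mul]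
  rfl

theorem measureReal_add_sign_le {Ω : Type*} {m0 : MeasurableSpace Ω} {μ : Measure Ω}
    [IsProbabilityMeasure μ] {Y τ : Ω → ℝ} (hY : Measurable Y) (hτ : Measurable τ)
    (hτval : ∀ ω, τ ω = 1 ∨ τ ω = -1) (hτhalf : μ {ω | τ ω = 1} = 1 / 2)
    (hindep : IndepFun Y τ μ) (x : ℝ) :
    μ.real {ω | Y ω + (τ ω - 1) / 2 ≤ x} =
      (μ.real {ω | Y ω ≤ x} + μ.real {ω | Y ω ≤ x + 1}) / 2 := by
  have hplus : μ.real (τ ⁻¹' {1}) = 1 / 2 := by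
    change (μ {ω | τ ω = 1}).toReal = 1 / 2
    rw [hτhalf]
    norm_num
  have hminus : μ.real (τ ⁻¹' {-1}) = 1 / 2 := by
    have hcompl : τ ⁻¹' {-1} = (τ ⁻¹' {1})ᶜ := by
      ext ω; rcases hτval ω with h | h <;> simp [h] <;> norm_num
    rw [hcompl, measureReal_compl (hτ (measurableSet_singleton 1)), probReal_univ, hplus]
    norm_num
  have hsplit : {ω | Y ω + (τ ω - 1) / 2 ≤ x} =
      (Y ⁻¹' Iic x ∩ τ ⁻¹' {1}) ∪ (Y ⁻¹' Iic (x + 1) ∩ τ ⁻¹' {-1}) := by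
    ext ω
    rcases hτval ω with h | h <;> norm_num [h]
  have hdisj :
      Disjoint (Y ⁻¹' Iic x ∩ τ ⁻¹' {1}) (Y ⁻¹' Iic (x + 1) ∩ τ ⁻¹' {-1}) :=
    ((disjoint_singleton.mpr (by norm_num)).preimage τ).mono inter_subset_right inter_subset_right
  rw [hsplit,
    measureReal_union hdisj ((hY measurableSet_Iic).inter (hτ (measurableSet_singleton _))),
    hindep.measureReal_inter_preimage_eq_mul measurableSet_Iic (measurableSet_singleton _),
    hindep.measureReal_inter_preimage_eq_mul measurableSet_Iic (measurableSet_singleton _),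
    hplus, hminus]
  simp only [preimage, mem_Iic]
  ring

theorem unfocused_forecaster_probabilistically_calibrated_general
    {Ω : Type*} {m0 : MeasurableSpace Ω} (μ : Measure Ω) [IsProbabilityMeasure μ]
    (G : ℝ → ℝ)
    (hGcont : Continuous G)
    (Y τ : Ω → ℝ) (hY : Measurable Y) (hτ : Measurable τ)
    (hYdist : ∀ x : ℝ, (μ {ω | Y ω ≤ x}).toReal = G x)
    (hτval : ∀ ω, τ ω = 1 ∨ τ ω = -1)
    (hτhalf : μ {ω | τ ω = 1} = 1 / 2)
    (hindep : IndepFun Y τ μ)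
    (F : Ω → ℝ → ℝ)
    (hFdef : ∀ ω y, F ω y = (G y + G (y + τ ω)) / 2) :
    ∀ u ∈ Icc (0 : ℝ) 1, (μ {ω | F ω (Y ω) ≤ u}).toReal = u := by
  set X : Ω → ℝ := fun ω => Y ω + (τ ω - 1) / 2
  have hX : Measurable X := by fun_prop
  have := Measure.isProbabilityMeasure_map (μ := μ) hX.aemeasurable
  have hcdf : cdf (μ.map X) = fun x => (G x + G (x + 1)) / 2 := by
    ext x
    rw [cdf_eq_real, map_measureReal_apply hX measurableSet_Iic, ← hYdist x, ← hYdist (x + 1)]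
    exact measureReal_add_sign_le hY hτ hτval hτhalf hindep x
  have hPIT : ∀ ω, F ω (Y ω) = cdf (μ.map X) (X ω) := by
    intro ω
    rcases hτval ω with h | h <;> simp only [hFdef, hcdf, X, h] <;> ring_nf
  intro u hu
  simp_rw [hPIT]
  exact measureReal_cdf_map_le hX (hcdf ▸ by fun_prop) hu

/-- the generalized unfocused forecaster is probabilistically calibrated: its
probability integral transform `Z_F = F(Y)` is uniformly distributed on `[0,1]`. -/
theorem unfocused_forecaster_probabilistically_calibrated
    {Ω : Type*} {m0 : MeasurableSpace Ω} (μ : Measure Ω) [IsProbabilityMeasure μ]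
    (a b : EReal) (hab : a < b)
    (G : ℝ → ℝ) (g : ℝ → ℝ)
    (hGmono : Monotone G) (hGcont : Continuous G)
    (hG0 : ∀ x : ℝ, (x : EReal) ≤ a → G x = 0)
    (hG1 : ∀ x : ℝ, b ≤ (x : EReal) → G x = 1)
    (hgcont : ContinuousOn g {x : ℝ | a < (x : EReal) ∧ (x : EReal) < b})
    (hgpos : ∀ x : ℝ, a < (x : EReal) → (x : EReal) < b → 0 < g x)
    (hderiv : ∀ x : ℝ, a < (x : EReal) → (x : EReal) < b → HasDerivAt G (g x) x)
    (Y τ : Ω → ℝ) (hY : Measurable Y) (hτ : Measurable τ)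
    (hYdist : ∀ x : ℝ, (μ {ω | Y ω ≤ x}).toReal = G x)
    (hτval : ∀ ω, τ ω = 1 ∨ τ ω = -1)
    (hτhalf : μ {ω | τ ω = 1} = 1 / 2)
    (hindep : IndepFun Y τ μ)
    (F : Ω → ℝ → ℝ)
    (hFdef : ∀ ω y, F ω y = (G y + G (y + τ ω)) / 2) :
    ∀ u ∈ Icc (0 : ℝ) 1, (μ {ω | F ω (Y ω) ≤ u}).toReal = u :=
  unfocused_forecaster_probabilistically_calibrated_general (m0 := m0) μ G hGcont Y τ hY hτ hYdist
    hτval hτhalf hindep F hFdef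
end
end

section
/- Unfocused forecaster with uniform outcome is not probabilistically tail calibrated: let Y be uniformly distributed on [0, 1], let τ be independent of Y with P(τ = +1) = P(τ = −1) = 1/2, and given τ define F(y) = (G(y) + G(y + τ))/2 where G is the cdf of the uniform distribution on [0,1]; thus F(y) = y/2 if τ = −1 and F(y) = (y + 1)/2 if τ = +1, for y ∈ [0,1]. Then for every u ∈ (0,1), lim_{t ↑ 1} P(Z_F^{(t)} ≤ u | Y > t) = 1/2 + u/2; in particular F is probabilistically calibrated but not probabilistically tail calibrated. -/
open MeasureTheory ProbabilityTheory Filter Set Topology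

noncomputable section

/-! Given the sign `τ`, the forecast is the uniform cdf on `[-1, 1]` (`τ = 1`) or on `[0, 2]`
(`τ = -1`); both are affine with slope `1/2` near `1`. By independence every event of the form
`P(Y, τ)` splits into two events about the uniform `Y`, each with weight `1/2`.
The PIT satisfies `F(Y) ≤ u` iff `Y ≤ 2u - 1`, resp. `Y ≤ 2u`, which have total probability `u`.
Near `t = 1` the excess PIT is uniform on the branch `τ = 1`, while on the branch `τ = -1` it is
at most `u` for every `Y > t` once `t ≥ 1 - u`; hence `P(Z ≤ u, Y > t) = (1 + u)(1 - t)/2`.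
Divided by `P(Y > t) = 1 - t` this is `1/2 + u/2`. Divided by `E[1 - F(t)] = (3 - 2t)/4`, which
stays away from `0` because the forecast for `τ = -1` puts mass `1/2` beyond `1`, it tends to
`0 ≠ u`. -/

lemma min_max_le_iff {v c : ℝ} (h0 : 0 ≤ c) (h1 : c < 1) : min (max v 0) 1 ≤ c ↔ v ≤ c := by
  simp only [min_def, max_def]; split_ifs <;> constructor <;> intro <;> linarith

lemma min_max_eq_self {x : ℝ} (h0 : 0 ≤ x) (h1 : x ≤ 1) : min (max x 0) 1 = x := by
  rw [max_eq_left h0, min_eq_left h1]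

lemma min_max_lt_one_iff {x : ℝ} : min (max x 0) 1 < 1 ↔ x < 1 := by
  simp

lemma min_max_sub_one_add_min_max {u : ℝ} (h0 : 0 ≤ u) (h1 : u ≤ 1) :
    min (max (2 * u - 1) 0) 1 + min (max (2 * u) 0) 1 = 2 * u := by
  simp only [min_def, max_def]; split_ifs <;> linarith

lemma min_max_add_min_max_add_sign {s : ℝ} (hs : s = 1 ∨ s = -1) (y : ℝ) :
    (min (max y 0) 1 + min (max (y + s) 0) 1) / 2 = min (max (2⁻¹ * y + (s + 1) / 4) 0) 1 := by
  rcases hs with rfl | rfl <;> simp only [min_def, max_def] <;> split_ifs <;> linarith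

lemma min_max_le_iff_of_affine {a b y u : ℝ} (ha : 0 < a) (hu0 : 0 ≤ u) (hu1 : u < 1) :
    min (max (a * y + b) 0) 1 ≤ u ↔ y ≤ (u - b) / a := by
  rw [min_max_le_iff hu0 hu1, le_div_iff₀ ha]
  constructor <;> intro <;> linarith

lemma excessCdf_min_max_affine_le_iff {a b t y u : ℝ} (ha : 0 < a) (hp0 : 0 ≤ a * t + b)
    (hp1 : a * t + b < 1) (hu0 : 0 ≤ u) (hu1 : u < 1) :
    excessCdf (fun x => min (max (a * x + b) 0) 1) t (y - t) ≤ u ∧ t < y ↔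
      y ∈ Ioc t (t + u * (1 - (a * t + b)) / a) := by
  have hFt : min (max (a * t + b) 0) 1 = a * t + b := min_max_eq_self hp0 hp1.le
  have hc0 : 0 ≤ u * (1 - (a * t + b)) + (a * t + b) := by nlinarith
  have hc1 : u * (1 - (a * t + b)) + (a * t + b) < 1 := by nlinarith
  rw [excessCdf, hFt, if_pos hp1, sub_add_cancel, div_le_iff₀ (by linarith), sub_le_iff_le_add,
    min_max_le_iff hc0 hc1, mem_Ioc, and_comm, ← sub_le_iff_le_add' (b := t), le_div_iff₀ ha]
  exact and_congr_right fun _ => by constructor <;> intro <;> linarith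

@[fun_prop]
lemma measurable_excessCdf {G : ℝ → ℝ} (hG : Measurable G) (t : ℝ) :
    Measurable (excessCdf G t) := by
  unfold excessCdf
  split_ifs <;> fun_prop

lemma toEndpoint_coe (x : ℝ) : toEndpoint x = 𝓝[<] x := by
  rw [toEndpoint, nhdsWithin, comap_inf, comap_principal, EReal.preimage_coe_Iio,
    ← EReal.isEmbedding_coe.nhds_eq_comap, nhdsWithin]

section UniformOutcome

variable {Ω : Type*} {m0 : MeasurableSpace Ω} {μ : Measure Ω} {Y : Ω → ℝ}
  (hYdist : ∀ x : ℝ, (μ {ω | Y ω ≤ x}).toReal = min (max x 0) 1)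
include hYdist

lemma upperEndpoint_eq_one_of_uniform [IsFiniteMeasure μ] : upperEndpoint μ Y = (1 : ℝ) := by
  have hsub : {x : ℝ | μ {ω | Y ω ≤ x} < 1} = Iio 1 := by
    ext x
    change μ {ω | Y ω ≤ x} < 1 ↔ x < 1
    rw [← ENNReal.toReal_lt_toReal (measure_ne_top μ _) ENNReal.one_ne_top,
      ENNReal.toReal_one, hYdist, min_max_lt_one_iff]
  rw [upperEndpoint, hsub, EReal.image_coe_Iio, csSup_Ioo (EReal.bot_lt_coe 1)]

lemma measureReal_lt_of_uniform [IsProbabilityMeasure μ] (hY : Measurable Y) (t : ℝ) :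
    (μ {ω | t < Y ω}).toReal = 1 - min (max t 0) 1 := by
  have hcompl : {ω | t < Y ω} = {ω | Y ω ≤ t}ᶜ := by ext; simp
  rw [← measureReal_def, hcompl, probReal_compl_eq_one_sub (measurableSet_le hY measurable_const),
    measureReal_def, hYdist]

lemma measureReal_Ioc_of_uniform [IsFiniteMeasure μ] (hY : Measurable Y) {t a : ℝ}
    (hta : t ≤ a) : (μ (Y ⁻¹' Ioc t a)).toReal = min (max a 0) 1 - min (max t 0) 1 := by
  have hdiff : Y ⁻¹' Ioc t a = {ω | Y ω ≤ a} \ {ω | Y ω ≤ t} := by ext; simp [and_comm]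
  rw [← measureReal_def, hdiff,
    measureReal_sdiff (ofPred_subset_ofPred.mpr fun ω h => h.trans hta)
      (measurableSet_le hY measurable_const),
    measureReal_def, measureReal_def, hYdist, hYdist]

lemma measureReal_min_max_affine_le_of_uniform {a b u : ℝ} (ha : 0 < a) (hu0 : 0 ≤ u)
    (hu1 : u < 1) :
    (μ {ω | min (max (a * Y ω + b) 0) 1 ≤ u}).toReal = min (max ((u - b) / a) 0) 1 := by
  simp_rw [min_max_le_iff_of_affine ha hu0 hu1]
  exact hYdist _

lemma measureReal_excessCdf_le_of_uniform [IsFiniteMeasure μ] (hY : Measurable Y)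
    {a b t u : ℝ} (ha : 0 < a) (hp0 : 0 ≤ a * t + b) (hp1 : a * t + b < 1) (hu0 : 0 ≤ u)
    (hu1 : u < 1) :
    (μ {ω | excessCdf (fun x => min (max (a * x + b) 0) 1) t (Y ω - t) ≤ u ∧ t < Y ω}).toReal =
      min (max (t + u * (1 - (a * t + b)) / a) 0) 1 - min (max t 0) 1 := by
  simp_rw [excessCdf_min_max_affine_le_iff ha hp0 hp1 hu0 hu1]
  exact measureReal_Ioc_of_uniform hYdist hY
    (le_add_of_nonneg_right (div_nonneg (mul_nonneg hu0 (by linarith)) ha.le))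

end UniformOutcome

section RademacherSign

variable {Ω : Type*} {m0 : MeasurableSpace Ω} {μ : Measure Ω} [IsProbabilityMeasure μ]
  {τ : Ω → ℝ} (hτ : Measurable τ) (hτval : ∀ ω, τ ω = 1 ∨ τ ω = -1)
  (hτhalf : μ {ω | τ ω = 1} = 1 / 2)
include hτ hτval hτhalf

lemma measureReal_preimage_singleton_of_sign {s : ℝ} (hs : s = 1 ∨ s = -1) :
    (μ (τ ⁻¹' {s})).toReal = 1 / 2 := by
  have hhalf : (μ (τ ⁻¹' {1})).toReal = 1 / 2 := by
    rw [show τ ⁻¹' {1} = {ω | τ ω = 1} from rfl, hτhalf]; norm_num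
  rcases hs with rfl | rfl
  · exact hhalf
  have hcompl : τ ⁻¹' {-1} = (τ ⁻¹' {1})ᶜ := by
    ext ω; rcases hτval ω with h | h <;> simp [h] <;> norm_num
  rw [← measureReal_def, hcompl, probReal_compl_eq_one_sub (hτ (measurableSet_singleton 1)),
    measureReal_def, hhalf]
  norm_num

lemma integral_comp_of_sign (g : ℝ → ℝ) : ∫ ω, g (τ ω) ∂μ = (g 1 + g (-1)) / 2 := by
  have hsplit : (fun ω => g (τ ω)) =
      (τ ⁻¹' {1}).indicator (fun _ => g 1) + (τ ⁻¹' {-1}).indicator (fun _ => g (-1)) := by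
    ext ω; rcases hτval ω with h | h <;> simp [indicator, h] <;> norm_num
  have hm : ∀ s : ℝ, MeasurableSet (τ ⁻¹' {s}) := fun s => hτ (measurableSet_singleton s)
  rw [hsplit, integral_add' ((integrable_const _).indicator (hm 1))
      ((integrable_const _).indicator (hm (-1))),
    integral_indicator_const _ (hm 1), integral_indicator_const _ (hm (-1)), smul_eq_mul,
    smul_eq_mul, measureReal_def, measureReal_def,
    measureReal_preimage_singleton_of_sign hτ hτval hτhalf (Or.inl rfl),
    measureReal_preimage_singleton_of_sign hτ hτval hτhalf (Or.inr rfl)]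
  ring

lemma measureReal_mem_of_indep_sign {Y : Ω → ℝ} (hY : Measurable Y) (hindep : IndepFun Y τ μ)
    (P : ℝ → ℝ → Prop) (h1 : MeasurableSet {y | P y 1}) (h2 : MeasurableSet {y | P y (-1)}) :
    (μ {ω | P (Y ω) (τ ω)}).toReal =
      ((μ {ω | P (Y ω) 1}).toReal + (μ {ω | P (Y ω) (-1)}).toReal) / 2 := by
  have hsplit : {ω | P (Y ω) (τ ω)} =
      (Y ⁻¹' {y | P y 1} ∩ τ ⁻¹' {1}) ∪ (Y ⁻¹' {y | P y (-1)} ∩ τ ⁻¹' {-1}) := by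
    ext ω; rcases hτval ω with h | h <;> simp [h] <;> norm_num
  have hdisj : Disjoint (Y ⁻¹' {y | P y 1} ∩ τ ⁻¹' {1}) (Y ⁻¹' {y | P y (-1)} ∩ τ ⁻¹' {-1}) :=
    ((disjoint_singleton.mpr (by norm_num)).preimage τ).mono inter_subset_right
      inter_subset_right
  rw [hsplit, ← measureReal_def,
    measureReal_union hdisj ((hY h2).inter (hτ (measurableSet_singleton _))), measureReal_def,
    measureReal_def, hindep.measure_inter_preimage_eq_mul _ _ h1 (measurableSet_singleton _),
    hindep.measure_inter_preimage_eq_mul _ _ h2 (measurableSet_singleton _),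
    ENNReal.toReal_mul, ENNReal.toReal_mul,
    measureReal_preimage_singleton_of_sign hτ hτval hτhalf (Or.inl rfl),
    measureReal_preimage_singleton_of_sign hτ hτval hτhalf (Or.inr rfl)]
  simp only [preimage_ofPred_eq]
  ring

end RademacherSign

section UnfocusedForecaster

variable {Ω : Type*} {m0 : MeasurableSpace Ω} {μ : Measure Ω} [IsProbabilityMeasure μ]
  {Y τ : Ω → ℝ} (hY : Measurable Y) (hτ : Measurable τ)
  (hYdist : ∀ x : ℝ, (μ {ω | Y ω ≤ x}).toReal = min (max x 0) 1) (hindep : IndepFun Y τ μ)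
  (hτval : ∀ ω, τ ω = 1 ∨ τ ω = -1) (hτhalf : μ {ω | τ ω = 1} = 1 / 2)
  {F : Ω → ℝ → ℝ} (hF : ∀ ω y, F ω y = min (max (2⁻¹ * y + (τ ω + 1) / 4) 0) 1)
include hτ hτval hτhalf hF

include hY hYdist hindep in
lemma unfocused_calibrated {u : ℝ} (hu : u ∈ Icc (0 : ℝ) 1) :
    (μ {ω | F ω (Y ω) ≤ u}).toReal = u := by
  obtain ⟨hu0, hu1⟩ := hu
  rcases hu1.eq_or_lt with rfl | hu1
  · have huniv : {ω | F ω (Y ω) ≤ 1} = univ := eq_univ_of_forall fun ω => by simp [hF]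
    rw [huniv, measure_univ, ENNReal.toReal_one]
  have key := measureReal_mem_of_indep_sign hτ hτval hτhalf hY hindep
    (fun y s => min (max (2⁻¹ * y + (s + 1) / 4) 0) 1 ≤ u)
    (measurableSet_le (by fun_prop) measurable_const)
    (measurableSet_le (by fun_prop) measurable_const)
  simp only [hF]
  rw [key, measureReal_min_max_affine_le_of_uniform hYdist (by norm_num) hu0 hu1,
    measureReal_min_max_affine_le_of_uniform hYdist (by norm_num) hu0 hu1,
    show (u - (1 + 1) / 4) / 2⁻¹ = 2 * u - 1 by ring,
    show (u - (-1 + 1) / 4) / 2⁻¹ = 2 * u by ring, min_max_sub_one_add_min_max hu0 hu1.le]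
  ring

lemma unfocused_integral_one_sub {t : ℝ} (ht : t ∈ Icc (0 : ℝ) 1) :
    ∫ ω, (1 - F ω t) ∂μ = (3 - 2 * t) / 4 := by
  obtain ⟨ht0, ht1⟩ := ht
  simp only [hF]
  rw [integral_comp_of_sign hτ hτval hτhalf (fun s => 1 - min (max (2⁻¹ * t + (s + 1) / 4) 0) 1),
    min_max_eq_self (by positivity) (by linarith), min_max_eq_self (by positivity) (by linarith)]
  ring

include hY hYdist hindep in
lemma unfocused_measureReal_excessPIT_le {u : ℝ} (hu : u ∈ Ioo (0 : ℝ) 1) :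
    ∀ᶠ t in 𝓝[<] (1 : ℝ),
      (μ {ω | excessPIT F Y t ω ≤ u ∧ t < Y ω}).toReal = (1 + u) * (1 - t) / 2 := by
  obtain ⟨hu0, hu1⟩ := hu
  filter_upwards [Ioo_mem_nhdsLT (show max (1 - u) 0 < 1 from max_lt (by linarith) one_pos)]
    with t ⟨htu, ht1⟩
  rw [max_lt_iff] at htu
  have hFω : ∀ ω, F ω = fun x => min (max (2⁻¹ * x + (τ ω + 1) / 4) 0) 1 :=
    fun ω => funext (hF ω)
  have hmeas : ∀ s : ℝ, MeasurableSet
      {y | excessCdf (fun x => min (max (2⁻¹ * x + (s + 1) / 4) 0) 1) t (y - t) ≤ u ∧ t < y} :=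
    fun s => (measurableSet_le (f := fun y =>
      excessCdf (fun x => min (max (2⁻¹ * x + (s + 1) / 4) 0) 1) t (y - t))
      (by fun_prop) measurable_const).inter measurableSet_Ioi
  have key := measureReal_mem_of_indep_sign hτ hτval hτhalf hY hindep
    (fun y s => excessCdf (fun x => min (max (2⁻¹ * x + (s + 1) / 4) 0) 1) t (y - t) ≤ u ∧ t < y)
    (hmeas 1) (hmeas (-1))
  simp only [excessPIT, hFω]
  rw [key, measureReal_excessCdf_le_of_uniform hYdist hY (by norm_num) (by linarith) (by linarith)
      hu0.le hu1,
    measureReal_excessCdf_le_of_uniform hYdist hY (by norm_num) (by linarith) (by linarith)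
      hu0.le hu1,
    show t + u * (1 - (2⁻¹ * t + (1 + 1) / 4)) / 2⁻¹ = t + u * (1 - t) by ring,
    show t + u * (1 - (2⁻¹ * t + (-1 + 1) / 4)) / 2⁻¹ = t + u * (2 - t) by ring,
    min_max_eq_self htu.2.le ht1.le, min_max_eq_self (by nlinarith) (by nlinarith),
    min_eq_right (le_max_of_le_left (by nlinarith))]
  ring

end UnfocusedForecaster

/-- the unfocused forecaster with a uniform outcome is probabilistically
calibrated but not probabilistically tail calibrated. -/
theorem unfocused_uniform_not_probTailCalibrated
    {Ω : Type*} {m0 : MeasurableSpace Ω} (μ : Measure Ω) [IsProbabilityMeasure μ]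
    (Y τ : Ω → ℝ) (hY : Measurable Y) (hτ : Measurable τ)
    (hYdist : ∀ x : ℝ, (μ {ω | Y ω ≤ x}).toReal = min (max x 0) 1)
    (hτval : ∀ ω, τ ω = 1 ∨ τ ω = -1)
    (hτhalf : μ {ω | τ ω = 1} = 1 / 2)
    (hindep : IndepFun Y τ μ)
    (F : Ω → ℝ → ℝ)
    (hFdef : ∀ ω y, F ω y =
      (min (max y 0) 1 + min (max (y + τ ω) 0) 1) / 2) :
    (∀ u ∈ Icc (0 : ℝ) 1, (μ {ω | F ω (Y ω) ≤ u}).toReal = u) ∧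
      (∀ u ∈ Ioo (0 : ℝ) 1,
        Tendsto (fun t : ℝ =>
            (μ {ω | excessPIT F Y t ω ≤ u ∧ t < Y ω}).toReal /
              (μ {ω | t < Y ω}).toReal)
          (𝓝[<] (1 : ℝ)) (𝓝 (1 / 2 + u / 2))) ∧
      ¬ ProbTailCalibrated μ F Y := by
  have hF : ∀ ω y, F ω y = min (max (2⁻¹ * y + (τ ω + 1) / 4) 0) 1 :=
    fun ω y => (hFdef ω y).trans (min_max_add_min_max_add_sign (hτval ω) y)
  refine ⟨fun u hu => unfocused_calibrated hY hτ hYdist hindep hτval hτhalf hF hu,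
    fun u hu => ?_, fun hcal => ?_⟩
  · refine tendsto_const_nhds.congr' ?_
    filter_upwards [unfocused_measureReal_excessPIT_le hY hτ hYdist hindep hτval hτhalf hF hu,
      Ioo_mem_nhdsLT zero_lt_one] with t hnum ht
    rw [hnum, measureReal_lt_of_uniform hYdist hY, min_max_eq_self ht.1.le ht.2.le,
      eq_div_iff (sub_ne_zero.mpr ht.2.ne')]
    ring
  · have hlim := hcal.2 (1 / 2) ⟨by norm_num, by norm_num⟩
    rw [upperEndpoint_eq_one_of_uniform hYdist, toEndpoint_coe] at hlim
    have hzero : Tendsto (fun t : ℝ => (1 + 1 / 2) * (1 - t) / 2 / ((3 - 2 * t) / 4))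
        (𝓝[<] 1) (𝓝 0) := by
      have hcont : ContinuousAt (fun t : ℝ => (1 + 1 / 2) * (1 - t) / 2 / ((3 - 2 * t) / 4)) 1 :=
        ContinuousAt.div (by fun_prop) (by fun_prop) (by norm_num)
      convert hcont.tendsto.mono_left nhdsWithin_le_nhds using 2
      norm_num
    refine absurd (tendsto_nhds_unique hlim (hzero.congr' ?_)) (by norm_num)
    filter_upwards [unfocused_measureReal_excessPIT_le hY hτ hYdist hindep hτval hτhalf hF
      (u := 1 / 2) ⟨by norm_num, by norm_num⟩, Ioo_mem_nhdsLT zero_lt_one] with t hnum ht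
    rw [hnum, unfocused_integral_one_sub hτ hτval hτhalf hF (Ioo_subset_Icc_self ht)]
end
end

section
/- Conditional law of the second largest: let G₁, G₂ be random cdfs on ℝ such that G₁ is almost surely stochastically smaller than G₂ (G₁⁻¹(u) ≤ G₂⁻¹(u) for all u ∈ (0,1), where Gⱼ⁻¹ is the quantile function), let λ be a deterministic cdf, and let (U, L) be independent random variables, independent of (G₁, G₂), with U uniform on (0,1) and L ∼ λ. Set Xⱼ = Gⱼ⁻¹(U) for j = 1, 2 and let Y be the second largest of (X₁, X₂, L). Then for every y ∈ ℝ, almost surely P(Y ≤ y | G₁, G₂) = λ(y)G₁(y) + (1 − λ(y))G₂(y) and P(Y > y | G₁, G₂) = (1 − λ(y))(1 − G₂(y)) + λ(y)(1 − G₁(y)). -/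
/-!
Since `G₁⁻¹ ≤ G₂⁻¹`, the second largest of `(X₁, X₂, L)` is `max X₁ (min X₂ L)`, and the Galois
connection `G⁻¹ u ≤ y ↔ u ≤ G y` turns `{Y ≤ y}` almost surely into the disjoint union of
`{U ≤ G₁ y, L ≤ y}` and `{U ≤ G₂ y, y < L}`. As `(U, L)` is independent of `(G₁, G₂)`, its
conditional probability is computed by freezing `(G₁, G₂)` and integrating against the product
law of `(U, L)`, which gives `λ(y) G₁(y) + (1 - λ(y)) G₂(y)`; the survival formula follows by
taking complements.
-/

open MeasureTheory ProbabilityTheory Filter Set Topology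

noncomputable section

/-- The (generalized inverse) quantile function of a cdf. -/
def qfun (G : ℝ → ℝ) (u : ℝ) : ℝ :=
  sInf {y : ℝ | u ≤ G y}

/-- The second largest (i.e. the median) of three real numbers. -/
def secondLargest (p q r : ℝ) : ℝ :=
  max (min p q) (min (max p q) r)

/-- `G` is a random cdf: coordinatewise measurable, and almost surely a monotone,
right-continuous cdf. -/
def IsRandomCdfRC {Ω : Type*} {mΩ : MeasurableSpace Ω} (μ : Measure Ω)
    (G : Ω → ℝ → ℝ) : Prop :=
  (∀ x : ℝ, Measurable fun ω => G ω x) ∧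
    ∀ᵐ ω ∂μ, Monotone (G ω) ∧ (∀ x : ℝ, ContinuousWithinAt (G ω) (Ici x) x) ∧
      Tendsto (G ω) atTop (𝓝 1) ∧ Tendsto (G ω) atBot (𝓝 0)

/-- The σ-algebra generated by the pair of random cdfs `(G₁, G₂)`. -/
def sigmaOfPair {Ω : Type*} (G₁ G₂ : Ω → ℝ → ℝ) : MeasurableSpace Ω :=
  MeasurableSpace.comap (fun ω => (G₁ ω, G₂ ω)) inferInstance

lemma secondLargest_le_iff_of_le {a b l : ℝ} (hab : a ≤ b) (y : ℝ) :
    secondLargest a b l ≤ y ↔ a ≤ y ∧ l ≤ y ∨ b ≤ y ∧ y < l := by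
  rw [secondLargest, min_eq_left hab, max_eq_right hab, max_le_iff, min_le_iff]
  rcases le_or_gt l y with hl | hl
  · simp [hl, not_lt.2 hl]
  · simpa [hl, not_le.2 hl] using hab.trans

lemma qfun_le_iff {G : ℝ → ℝ} (hmono : Monotone G) (hrc : ∀ x, ContinuousWithinAt G (Ici x) x)
    (htop : Tendsto G atTop (𝓝 1)) (hbot : Tendsto G atBot (𝓝 0)) {u : ℝ} (hu : u ∈ Ioo 0 1)
    (y : ℝ) : qfun G u ≤ y ↔ u ≤ G y := by
  have hne : {z | u ≤ G z}.Nonempty :=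
    (htop.eventually (eventually_gt_nhds hu.2)).exists.imp fun _ => le_of_lt
  have hbdd : BddBelow {z | u ≤ G z} := by
    obtain ⟨z₀, hz₀⟩ := (hbot.eventually (eventually_lt_nhds hu.1)).exists
    refine ⟨z₀, fun z hz => le_of_not_gt fun hlt => ?_⟩
    exact absurd hz (not_le.2 ((hmono hlt.le).trans_lt hz₀))
  refine ⟨fun h => ?_, fun h => csInf_le hbdd h⟩
  have hgt : ∀ z, y < z → u ≤ G z := fun z hz => by
    obtain ⟨s, hs, hsz⟩ := exists_lt_of_csInf_lt hne (h.trans_lt hz)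
    exact hs.trans (hmono hsz.le)
  exact ge_of_tendsto ((hrc y).mono_left (nhdsWithin_mono y Ioi_subset_Ici_self))
    (eventually_nhdsWithin_of_forall hgt)

namespace IsRandomCdfRC

variable {Ω : Type*} {mΩ : MeasurableSpace Ω} {μ : Measure Ω} {G G₁ G₂ : Ω → ℝ → ℝ}

lemma measurable (hG : IsRandomCdfRC μ G) : Measurable G :=
  measurable_pi_lambda _ hG.1

lemma ae_mem_Icc (hG : IsRandomCdfRC μ G) : ∀ᵐ ω ∂μ, ∀ x, G ω x ∈ Icc (0 : ℝ) 1 := by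
  filter_upwards [hG.2] with ω hω x
  exact ⟨hω.1.le_of_tendsto hω.2.2.2 x, hω.1.ge_of_tendsto hω.2.2.1 x⟩

lemma ae_qfun_le_iff (hG : IsRandomCdfRC μ G) :
    ∀ᵐ ω ∂μ, ∀ u ∈ Ioo (0 : ℝ) 1, ∀ y, qfun (G ω) u ≤ y ↔ u ≤ G ω y := by
  filter_upwards [hG.2] with ω hω u hu y
  exact qfun_le_iff hω.1 hω.2.1 hω.2.2.1 hω.2.2.2 hu y

lemma ae_secondLargest_qfun_le_iff (hG₁ : IsRandomCdfRC μ G₁) (hG₂ : IsRandomCdfRC μ G₂)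
    (hstoch : ∀ᵐ ω ∂μ, ∀ u ∈ Ioo (0 : ℝ) 1, qfun (G₁ ω) u ≤ qfun (G₂ ω) u) {U : Ω → ℝ}
    (hU : ∀ᵐ ω ∂μ, U ω ∈ Ioo (0 : ℝ) 1) (L : Ω → ℝ) (y : ℝ) :
    ∀ᵐ ω ∂μ, secondLargest (qfun (G₁ ω) (U ω)) (qfun (G₂ ω) (U ω)) (L ω) ≤ y ↔
      U ω ≤ G₁ ω y ∧ L ω ≤ y ∨ U ω ≤ G₂ ω y ∧ y < L ω := by
  filter_upwards [hG₁.ae_qfun_le_iff, hG₂.ae_qfun_le_iff, hstoch, hU] with ω h₁ h₂ hst hu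
  rw [secondLargest_le_iff_of_le (hst _ hu), h₁ _ hu, h₂ _ hu]

end IsRandomCdfRC

section CondProb

variable {Ω : Type*} {m m0 : MeasurableSpace Ω} {μ : Measure Ω}

lemma condProb_congr_ae {s t : Set Ω} (h : s =ᵐ[μ] t) : condProb μ m s =ᵐ[μ] condProb μ m t :=
  condExp_congr_ae (indicator_ae_eq_of_ae_eq_set h)

lemma condProb_compl [IsFiniteMeasure μ] (hm : m ≤ m0) {s : Set Ω} (hs : MeasurableSet s) :
    condProb μ m sᶜ =ᵐ[μ] fun ω => 1 - condProb μ m s ω := by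
  rw [condProb, indicator_compl]
  refine (condExp_sub (integrable_const 1) ((integrable_const 1).indicator hs) m).trans ?_
  rw [condExp_const hm]
  rfl

lemma condProb_compl_of_ae_eq [IsFiniteMeasure μ] (hm : m ≤ m0) {s t : Set Ω}
    (ht : MeasurableSet t) (h : s =ᵐ[μ] t) :
    condProb μ m sᶜ =ᵐ[μ] fun ω => 1 - condProb μ m t ω :=
  (condProb_congr_ae h.compl).trans (condProb_compl hm ht)

variable {β γ : Type*} {mβ : MeasurableSpace β} [MeasurableSpace γ] [StandardBorelSpace γ]
  [Nonempty γ] [IsFiniteMeasure μ] {V : Ω → β} {T : Ω → γ}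

lemma condDistrib_ae_eq_const_of_indepFun (hV : Measurable V) (hT : Measurable T)
    (h : IndepFun V T μ) : condDistrib T V μ =ᵐ[μ.map V] Kernel.const β (μ.map T) :=
  condDistrib_ae_eq_of_measure_eq_compProd V hT.aemeasurable <| by
    rw [Measure.compProd_const,
      (indepFun_iff_map_prod_eq_prod_map_map hV.aemeasurable hT.aemeasurable).1 h]

lemma condProb_preimage_ae_eq_measureReal_of_indepFun (hV : Measurable V) (hT : Measurable T)
    (h : IndepFun V T μ) {S : Set (β × γ)} (hS : MeasurableSet S) :
    condProb μ (mβ.comap V) ((fun ω => (V ω, T ω)) ⁻¹' S) =ᵐ[μ]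
      fun ω => (μ.map T).real (Prod.mk (V ω) ⁻¹' S) := by
  have hcond := condExp_prod_ae_eq_integral_condDistrib hV hT.aemeasurable
    ((stronglyMeasurable_const (b := (1 : ℝ))).indicator hS)
    ((integrable_const (μ := μ) (1 : ℝ)).indicator (hS.preimage (hV.prodMk hT)))
  filter_upwards [hcond, ae_of_ae_map hV.aemeasurable
    (condDistrib_ae_eq_const_of_indepFun hV hT h)] with ω hω hconst
  rw [hconst, Kernel.const_apply] at hω
  exact hω.trans (integral_indicator_one (measurable_prodMk_left hS))

end CondProb

lemma measureReal_prod_union_prod_of_disjoint {α β : Type*} [MeasurableSpace α]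
    [MeasurableSpace β] (ν : Measure α) (ρ : Measure β) [IsFiniteMeasure ν] [IsFiniteMeasure ρ]
    {A B : Set α} {C D : Set β} (hB : MeasurableSet B) (hD : MeasurableSet D)
    (hCD : Disjoint C D) :
    (ν.prod ρ).real (A ×ˢ C ∪ B ×ˢ D) = ν.real A * ρ.real C + ν.real B * ρ.real D := by
  rw [measureReal_union (disjoint_prod.2 (Or.inr hCD)) (hB.prod hD), measureReal_prod_prod,
    measureReal_prod_prod]

lemma measureReal_uniform_prod_union_prod_Iic_Ioi (ν ρ : Measure ℝ) [IsFiniteMeasure ν]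
    [IsProbabilityMeasure ρ] (hν : ∀ p ∈ Icc (0 : ℝ) 1, ν (Iic p) = ENNReal.ofReal p) {p q : ℝ}
    (hp : p ∈ Icc (0 : ℝ) 1) (hq : q ∈ Icc (0 : ℝ) 1) (y : ℝ) :
    (ν.prod ρ).real (Iic p ×ˢ Iic y ∪ Iic q ×ˢ Ioi y) =
      ρ.real (Iic y) * p + (1 - ρ.real (Iic y)) * q := by
  have hν_real : ∀ p ∈ Icc (0 : ℝ) 1, ν.real (Iic p) = p := fun p hp => by
    rw [measureReal_def, hν p hp, ENNReal.toReal_ofReal hp.1]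
  rw [measureReal_prod_union_prod_of_disjoint ν ρ measurableSet_Iic measurableSet_Ioi
    (Iic_disjoint_Ioi le_rfl), hν_real p hp, hν_real q hq, ← compl_Iic,
    probReal_compl_eq_one_sub measurableSet_Iic]
  ring

theorem secondLargest_conditional_law_general
    {Ω : Type*} {m0 : MeasurableSpace Ω} (μ : Measure Ω) [IsProbabilityMeasure μ]
    (G₁ G₂ : Ω → ℝ → ℝ) (hG₁ : IsRandomCdfRC μ G₁) (hG₂ : IsRandomCdfRC μ G₂)
    (hstoch : ∀ᵐ ω ∂μ, ∀ u ∈ Ioo (0 : ℝ) 1, qfun (G₁ ω) u ≤ qfun (G₂ ω) u)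
    (lam : ℝ → ℝ)
    (U L : Ω → ℝ) (hU : Measurable U) (hL : Measurable L)
    (hUunif : ∀ u ∈ Icc (0 : ℝ) 1, μ {ω | U ω ≤ u} = ENNReal.ofReal u)
    (hUrange : μ {ω | 0 < U ω ∧ U ω < 1} = 1)
    (hLlaw : ∀ y : ℝ, (μ {ω | L ω ≤ y}).toReal = lam y)
    (hULindep : IndepFun U L μ)
    (hindep : IndepFun (fun ω => (U ω, L ω)) (fun ω => (G₁ ω, G₂ ω)) μ)
    (Y : Ω → ℝ)
    (hYdef : ∀ ω, Y ω = secondLargest (qfun (G₁ ω) (U ω)) (qfun (G₂ ω) (U ω)) (L ω)) :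
    ∀ y : ℝ,
      (condProb μ (sigmaOfPair G₁ G₂) {ω' | Y ω' ≤ y} =ᵐ[μ]
        fun ω => lam y * G₁ ω y + (1 - lam y) * G₂ ω y) ∧
      (condProb μ (sigmaOfPair G₁ G₂) {ω' | y < Y ω'} =ᵐ[μ]
        fun ω => (1 - lam y) * (1 - G₂ ω y) + lam y * (1 - G₁ ω y)) := by
  intro y
  set V := fun ω => (G₁ ω, G₂ ω)
  set T := fun ω => (U ω, L ω)
  have hV : Measurable V := hG₁.measurable.prodMk hG₂.measurable
  have hT : Measurable T := hU.prodMk hL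
  let S : Set (((ℝ → ℝ) × (ℝ → ℝ)) × (ℝ × ℝ)) :=
    {z | z.2.1 ≤ z.1.1 y ∧ z.2.2 ≤ y ∨ z.2.1 ≤ z.1.2 y ∧ y < z.2.2}
  have hS : MeasurableSet S := by measurability
  have hUmem : ∀ᵐ ω ∂μ, U ω ∈ Ioo (0 : ℝ) 1 := by
    rwa [ae_iff_measure_eq (hU measurableSet_Ioo).nullMeasurableSet, measure_univ]
  have hevent : {ω | Y ω ≤ y} =ᵐ[μ] (fun ω => (V ω, T ω)) ⁻¹' S := by
    refine eventuallyEq_set.2 ?_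
    filter_upwards [hG₁.ae_secondLargest_qfun_le_iff hG₂ hstoch hUmem L y] with ω hω
    rwa [← hYdef] at hω
  have hcond : condProb μ (sigmaOfPair G₁ G₂) ((fun ω => (V ω, T ω)) ⁻¹' S) =ᵐ[μ]
      fun ω => lam y * G₁ ω y + (1 - lam y) * G₂ ω y := by
    have := Measure.isProbabilityMeasure_map (μ := μ) hL.aemeasurable
    have hlawL : (μ.map L).real (Iic y) = lam y :=
      (map_measureReal_apply hL measurableSet_Iic).trans (hLlaw y)
    filter_upwards [condProb_preimage_ae_eq_measureReal_of_indepFun hV hT hindep.symm hS,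
      hG₁.ae_mem_Icc, hG₂.ae_mem_Icc] with ω hω h₁ h₂
    refine hω.trans ?_
    rw [hULindep.map_prod_eq_prod_map_map hU.aemeasurable hL.aemeasurable, ← hlawL]
    exact measureReal_uniform_prod_union_prod_Iic_Ioi _ _
      (fun p hp => (Measure.map_apply hU measurableSet_Iic).trans (hUunif p hp)) (h₁ y) (h₂ y) y
  refine ⟨(condProb_congr_ae hevent).trans hcond, ?_⟩
  have hgt : {ω | y < Y ω} = {ω | Y ω ≤ y}ᶜ := by
    ext ω
    simp
  filter_upwards [condProb_compl_of_ae_eq (m := sigmaOfPair G₁ G₂) hV.comap_le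
    (hS.preimage (hV.prodMk hT)) hevent, hcond] with ω hcompl hω
  rw [hgt, hcompl, hω]
  ring

/-- the conditional law of the second largest of `(X₁, X₂, L)` given
`(G₁, G₂)` is `λ(y)G₁(y) + (1 - λ(y))G₂(y)`, with the corresponding survival formula. -/
theorem secondLargest_conditional_law
    {Ω : Type*} {m0 : MeasurableSpace Ω} (μ : Measure Ω) [IsProbabilityMeasure μ]
    (G₁ G₂ : Ω → ℝ → ℝ) (hG₁ : IsRandomCdfRC μ G₁) (hG₂ : IsRandomCdfRC μ G₂)
    (hstoch : ∀ᵐ ω ∂μ, ∀ u ∈ Ioo (0 : ℝ) 1, qfun (G₁ ω) u ≤ qfun (G₂ ω) u)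
    (lam : ℝ → ℝ) (hlammono : Monotone lam)
    (hlamtop : Tendsto lam atTop (𝓝 1)) (hlambot : Tendsto lam atBot (𝓝 0))
    (U L : Ω → ℝ) (hU : Measurable U) (hL : Measurable L)
    (hUunif : ∀ u ∈ Icc (0 : ℝ) 1, μ {ω | U ω ≤ u} = ENNReal.ofReal u)
    (hUrange : μ {ω | 0 < U ω ∧ U ω < 1} = 1)
    (hLlaw : ∀ y : ℝ, (μ {ω | L ω ≤ y}).toReal = lam y)
    (hULindep : IndepFun U L μ)
    (hindep : IndepFun (fun ω => (U ω, L ω)) (fun ω => (G₁ ω, G₂ ω)) μ)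
    (Y : Ω → ℝ)
    (hYdef : ∀ ω, Y ω = secondLargest (qfun (G₁ ω) (U ω)) (qfun (G₂ ω) (U ω)) (L ω)) :
    ∀ y : ℝ,
      (condProb μ (sigmaOfPair G₁ G₂) {ω' | Y ω' ≤ y} =ᵐ[μ]
        fun ω => lam y * G₁ ω y + (1 - lam y) * G₂ ω y) ∧
      (condProb μ (sigmaOfPair G₁ G₂) {ω' | y < Y ω'} =ᵐ[μ]
        fun ω => (1 - lam y) * (1 - G₂ ω y) + lam y * (1 - G₁ ω y)) :=
  secondLargest_conditional_law_general (m0 := m0) μ G₁ G₂ hG₁ hG₂ hstoch lam U L hU hL hUunif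
    hUrange hLlaw hULindep hindep Y hYdef
end
end
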